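/- arXiv:math/0504241 — 9 statements merged into one kernel-verified Lean document; each statement's English description precedes it below -/
import Mathlib

section
/- Let X be a complete CAT(0) space and let E ⊆ E' ⊆ X be two nonempty bounded closed convex subsets. Let ρ (respectively ρ') be the circumradius of E (respectively E'), and let c (respectively c') be a circumcentre of E (respectively E'), i.e. a point with E ⊆ B̄(c,ρ) and E' ⊆ B̄(c',ρ'). Then d(c', c) ≤ √2 · √(ρ'² − ρ²). -/
/-- A map `σ : ℝ → X` is a geodesic (isometric) on the interval `[a, b]`. -/
def IsGeodesicOn {X : Type*} [MetricSpace X] (σ : ℝ → X) (a b : ℝ) : Prop :=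
  ∀ s ∈ Set.Icc a b, ∀ t ∈ Set.Icc a b, dist (σ s) (σ t) = |s - t|

/-- A geodesic metric space: any two points are joined by a geodesic segment. -/
def IsGeodesicSpace (X : Type*) [MetricSpace X] : Prop :=
  ∀ x y : X, ∃ σ : ℝ → X, IsGeodesicOn σ 0 (dist x y) ∧ σ 0 = x ∧ σ (dist x y) = y

/-- A CAT(0) space: a geodesic space satisfying the CN inequality of Bruhat–Tits
for all (metric) midpoints. -/
def IsCAT0 (X : Type*) [MetricSpace X] : Prop :=
  IsGeodesicSpace X ∧
    ∀ x c c' m : X, dist m c = dist c c' / 2 → dist m c' = dist c c' / 2 →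
      2 * dist m x ^ 2 ≤ dist c' x ^ 2 + dist c x ^ 2 - dist c' c ^ 2 / 2

/-- A subset of a metric space is (geodesically) convex if it contains every geodesic
segment joining any two of its points. -/
def GConvex {X : Type*} [MetricSpace X] (A : Set X) : Prop :=
  ∀ (σ : ℝ → X) (a b : ℝ), a ≤ b → IsGeodesicOn σ a b → σ a ∈ A → σ b ∈ A →
    ∀ t ∈ Set.Icc a b, σ t ∈ A

/-- `ρ` is an action of the group `G` on `X` by isometries. -/
def IsIsometricAction {G X : Type*} [Group G] [MetricSpace X] (ρ : G → X → X) : Prop :=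
  (∀ x, ρ 1 x = x) ∧ (∀ g h x, ρ (g * h) x = ρ g (ρ h x)) ∧ ∀ g : G, Isometry (ρ g)

/-- A subset `T ⊆ X` is `Q`-evanescent: the set of displacements `d(g x, x)`,
`g ∈ Q`, `x ∈ T`, is bounded. -/
def QEvanescent {G X : Type*} [MetricSpace X] (ρ : G → X → X) (Q : Set G) (T : Set X) : Prop :=
  ∃ C : ℝ, ∀ g ∈ Q, ∀ x ∈ T, dist (ρ g x) x ≤ C

/-- The action is evanescent: there is an unbounded set which is `Q`-evanescent
for every compact `Q ⊆ G`. -/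
def Evanescent {G X : Type*} [TopologicalSpace G] [MetricSpace X] (ρ : G → X → X) : Prop :=
  ∃ T : Set X, ¬ Bornology.IsBounded T ∧ ∀ Q : Set G, IsCompact Q → QEvanescent ρ Q T

/-- The action is weakly evanescent: for every compact `Q ⊆ G` there is an unbounded
`Q`-evanescent set. -/
def WeaklyEvanescent {G X : Type*} [TopologicalSpace G] [MetricSpace X] (ρ : G → X → X) : Prop :=
  ∀ Q : Set G, IsCompact Q → ∃ T : Set X, ¬ Bornology.IsBounded T ∧ QEvanescent ρ Q T

/-- The circumradius of a subset `A` of a metric space: the infimum of all `r > 0`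
such that `A` is contained in some closed ball of radius `r`. -/
noncomputable def circumradius {X : Type*} [MetricSpace X] (A : Set X) : ℝ :=
  sInf {r : ℝ | 0 < r ∧ ∃ x : X, A ⊆ Metric.closedBall x r}

/-! Let `m` be the midpoint of `c` and `c'`. For `x ∈ E` the CN inequality, together with
`d(c, x) ≤ ρ` and `d(c', x) ≤ ρ'`, gives `d(m, x)² ≤ (ρ² + ρ'²)/2 − d(c, c')²/4`. Thus `E` lies in a
ball about `m` of that radius, whose square is therefore at least `ρ²`; rearranging gives
`d(c, c')² ≤ 2 (ρ'² − ρ²)`. -/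

open Metric

section

variable {X : Type*} [MetricSpace X]

theorem IsGeodesicSpace.exists_midpoint (hX : IsGeodesicSpace X) (x y : X) :
    ∃ m : X, dist m x = dist x y / 2 ∧ dist m y = dist x y / 2 := by
  obtain ⟨σ, hσ, hσ0, hσd⟩ := hX x y
  have hd : 0 ≤ dist x y := dist_nonneg
  have hhalf : dist x y / 2 ∈ Set.Icc 0 (dist x y) := ⟨by linarith, by linarith⟩
  refine ⟨σ (dist x y / 2), ?_, ?_⟩
  · have h := hσ _ hhalf 0 ⟨le_rfl, hd⟩
    rwa [hσ0, sub_zero, abs_of_nonneg (by linarith)] at h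
  · have h := hσ _ hhalf _ ⟨hd, le_rfl⟩
    rw [hσd, abs_of_nonpos (by linarith)] at h
    linarith

theorem circumradius_le_of_subset_closedBall {A : Set X} {x : X} {r : ℝ}
    (hr : 0 ≤ r) (hA : A ⊆ closedBall x r) : circumradius A ≤ r := by
  refine le_of_forall_pos_le_add fun ε hε => csInf_le ⟨0, fun s hs => hs.1.le⟩ ?_
  exact ⟨by linarith, x, hA.trans (closedBall_subset_closedBall (by linarith))⟩

theorem circumradius_nonneg (A : Set X) : 0 ≤ circumradius A :=
  Real.sInf_nonneg fun _ hr => hr.1.le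

theorem circumradius_sq_le_of_forall_dist_sq_le {A : Set X}
    (hA : A.Nonempty) {x : X} {s : ℝ} (h : ∀ y ∈ A, dist y x ^ 2 ≤ s) : circumradius A ^ 2 ≤ s := by
  obtain ⟨y, hy⟩ := hA
  have hs : 0 ≤ s := (sq_nonneg _).trans (h y hy)
  have hle : circumradius A ≤ √s :=
    circumradius_le_of_subset_closedBall (Real.sqrt_nonneg s) fun z hz =>
      Real.le_sqrt_of_sq_le (h z hz)
  simpa only [Real.sq_sqrt hs] using pow_le_pow_left₀ (circumradius_nonneg A) hle 2

theorem IsCAT0.dist_midpoint_sq_le (hX : IsCAT0 X)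
    {c c' m x : X} {r r' : ℝ} (hmc : dist m c = dist c c' / 2)
    (hmc' : dist m c' = dist c c' / 2) (hc : dist x c ≤ r) (hc' : dist x c' ≤ r') :
    dist x m ^ 2 ≤ (r ^ 2 + r' ^ 2) / 2 - dist c c' ^ 2 / 4 := by
  have hCN := hX.2 x c c' m hmc hmc'
  rw [dist_comm c' c, dist_comm m x, dist_comm c x, dist_comm c' x] at hCN
  have hcx : dist x c ^ 2 ≤ r ^ 2 := pow_le_pow_left₀ dist_nonneg hc 2
  have hc'x : dist x c' ^ 2 ≤ r' ^ 2 := pow_le_pow_left₀ dist_nonneg hc' 2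
  linarith

end

theorem circumcentre_distance_le_general
    {X : Type*} [MetricSpace X] (hX : IsCAT0 X)
    (E E' : Set X) (hEE' : E ⊆ E')
    (hEne : E.Nonempty)
    (ρ ρ' : ℝ) (hρ : ρ = circumradius E)
    (c c' : X) (hc : E ⊆ Metric.closedBall c ρ) (hc' : E' ⊆ Metric.closedBall c' ρ') :
    dist c' c ≤ Real.sqrt 2 * Real.sqrt (ρ' ^ 2 - ρ ^ 2) := by
  subst hρ
  obtain ⟨m, hmc, hmc'⟩ := hX.1.exists_midpoint c c'
  have hρ_sq : circumradius E ^ 2 ≤ (circumradius E ^ 2 + ρ' ^ 2) / 2 - dist c c' ^ 2 / 4 :=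
    circumradius_sq_le_of_forall_dist_sq_le hEne fun x hx =>
      hX.dist_midpoint_sq_le hmc hmc' (hc hx) (hc' (hEE' hx))
  rw [← Real.sqrt_mul zero_le_two, dist_comm]
  exact Real.le_sqrt_of_sq_le (by linarith)

/-- Monod, Lemma on circumcentres: if `E ⊆ E'` are nonempty bounded closed convex subsets
of a complete CAT(0) space, with circumradii `ρ ≤ ρ'` and circumcentres `c, c'`,
then `d(c', c) ≤ √2 · √(ρ'² − ρ²)`. -/
theorem circumcentre_distance_le
    {X : Type*} [MetricSpace X] [CompleteSpace X] (hX : IsCAT0 X)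
    (E E' : Set X) (hEE' : E ⊆ E')
    (hEne : E.Nonempty) (hE'ne : E'.Nonempty)
    (hEbdd : Bornology.IsBounded E) (hE'bdd : Bornology.IsBounded E')
    (hEcl : IsClosed E) (hE'cl : IsClosed E')
    (hEcv : GConvex E) (hE'cv : GConvex E')
    (ρ ρ' : ℝ) (hρ : ρ = circumradius E) (hρ' : ρ' = circumradius E')
    (c c' : X) (hc : E ⊆ Metric.closedBall c ρ) (hc' : E' ⊆ Metric.closedBall c' ρ') :
    dist c' c ≤ Real.sqrt 2 * Real.sqrt (ρ' ^ 2 - ρ ^ 2) :=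
  circumcentre_distance_le_general hX E E' hEE' hEne ρ ρ' hρ c c' hc hc'
end

section
/- Let X be a complete CAT(0) space and C ⊆ X a nonempty bounded closed convex subset. Then C is compact for the topology 𝒯_c, the weakest topology on X in which every metrically closed convex subset of X is closed. In particular, every family 𝓕 of metrically closed convex subsets of X such that every finite subfamily has nonempty intersection with C satisfies ⋂_{F ∈ 𝓕} (F ∩ C) ≠ ∅. -/
/-- The topology `𝒯_c`: the weakest topology on `X` in which every metrically closed
convex subset is closed (generated by the complements of such sets). -/
def Tc (X : Type*) [MetricSpace X] : TopologicalSpace X :=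
  TopologicalSpace.generateFrom {U : Set X | ∃ C : Set X, IsClosed C ∧ GConvex C ∧ U = Cᶜ}

section Aux

variable {X : Type*} [MetricSpace X]

/-- A geodesic midpoint of two points of a convex set lies in the set. -/
lemma exists_midpoint_mem (hX : IsCAT0 X) {D : Set X} (hD : GConvex D) {u v : X}
    (hu : u ∈ D) (hv : v ∈ D) :
    ∃ m ∈ D, dist m u = dist u v / 2 ∧ dist m v = dist u v / 2 := by
  obtain ⟨σ, hσ, h0, h1⟩ := hX.1 u v
  set d := dist u v with hd'
  have hd : 0 ≤ d := dist_nonneg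
  have hmem : d / 2 ∈ Set.Icc (0:ℝ) d := ⟨by linarith, by linarith⟩
  refine ⟨σ (d / 2), hD σ 0 d hd hσ (h0 ▸ hu) (h1 ▸ hv) (d / 2) hmem, ?_, ?_⟩
  · rw [← h0, hσ (d/2) hmem 0 ⟨le_refl 0, hd⟩]
    rw [abs_of_nonneg (by linarith)]; ring
  · rw [← h1, hσ (d/2) hmem d ⟨hd, le_refl d⟩]
    rw [abs_of_nonpos (by linarith)]; ring

/-- Key CN estimate: two almost-minimizers of the distance to `p` in a convex set are close. -/
lemma dist_sq_le_aux (hX : IsCAT0 X) {D : Set X} (hD : GConvex D) {p u v : X}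
    (hu : u ∈ D) (hv : v ∈ D) {r ε : ℝ} (hr : 0 ≤ r) (hε : 0 < ε) (hε1 : ε ≤ 1)
    (hinf : r - ε ≤ Metric.infDist p D)
    (hdu : dist p u ≤ r + ε) (hdv : dist p v ≤ r + ε) :
    dist u v ^ 2 ≤ 16 * (r + 1) * ε := by
  obtain ⟨m, hmD, hm1, hm2⟩ := exists_midpoint_mem hX hD hu hv
  have hCN := hX.2 p u v m hm1 hm2
  rw [dist_comm v p, dist_comm u p, dist_comm m p, dist_comm v u] at hCN
  have hpm : r - ε ≤ dist p m := hinf.trans (Metric.infDist_le_dist_of_mem hmD)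
  have hpm0 : (0:ℝ) ≤ dist p m := dist_nonneg
  have h1 : dist p u ^ 2 ≤ (r + ε) ^ 2 := by nlinarith [dist_nonneg (x := p) (y := u)]
  have h2 : dist p v ^ 2 ≤ (r + ε) ^ 2 := by nlinarith [dist_nonneg (x := p) (y := v)]
  rcases le_or_gt ε r with hc | hc
  · have hm2' : (r - ε) ^ 2 ≤ dist p m ^ 2 := by nlinarith
    nlinarith [hCN, h1, h2, hm2', hε]
  · have hm2' : (0:ℝ) ≤ dist p m ^ 2 := sq_nonneg _
    nlinarith [hCN, h1, h2, hm2', hε, hε1, hr, mul_pos hε hε]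

/-- The main intersection lemma: a family of closed convex sets whose finite subfamilies
meet a nonempty bounded closed convex set `C` has nonempty intersection with `C`. -/
lemma core_inter_nonempty [CompleteSpace X] (hX : IsCAT0 X)
    (C : Set X) (hne : C.Nonempty) (hbdd : Bornology.IsBounded C)
    (hcl : IsClosed C) (hcv : GConvex C)
    (F : Set (Set X)) (hF : ∀ A ∈ F, IsClosed A ∧ GConvex A)
    (hFIP : ∀ A : Set (Set X), A ⊆ F → A.Finite → (⋂ B ∈ A, B ∩ C).Nonempty) :
    (⋂ B ∈ F, B ∩ C).Nonempty := by
  classical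
  obtain ⟨p, hp⟩ := hne
  set J : Set (Set X) → Set X := fun A => C ∩ ⋂ B ∈ A, B with hJ
  have hJne : ∀ A : Set (Set X), A ⊆ F → A.Finite → (J A).Nonempty := by
    intro A hAF hAfin
    obtain ⟨x, hx⟩ := hFIP A hAF hAfin
    rcases A.eq_empty_or_nonempty with rfl | ⟨B₀, hB₀⟩
    · exact ⟨p, hp, by simp⟩
    · have hx' : ∀ B ∈ A, x ∈ B ∩ C := by
        intro B hB; exact Set.mem_iInter₂.mp hx B hB
      exact ⟨x, (hx' B₀ hB₀).2, Set.mem_iInter₂.mpr fun B hB => (hx' B hB).1⟩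
  have hJsub : ∀ A : Set (Set X), J A ⊆ C := fun A => Set.inter_subset_left
  have hJconv : ∀ A : Set (Set X), A ⊆ F → GConvex (J A) := by
    intro A hAF σ a b hab hσ h1 h2 t ht
    refine ⟨hcv σ a b hab hσ h1.1 h2.1 t ht, Set.mem_iInter₂.mpr fun B hB => ?_⟩
    exact (hF B (hAF hB)).2 σ a b hab hσ (Set.mem_iInter₂.mp h1.2 B hB)
      (Set.mem_iInter₂.mp h2.2 B hB) t ht
  -- the sup of distances from p to finite intersections
  set S : Set ℝ := (fun A : Set (Set X) => Metric.infDist p (J A)) '' {A | A ⊆ F ∧ A.Finite}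
    with hS
  have hSne : S.Nonempty := ⟨Metric.infDist p (J ∅), ⟨∅, ⟨by simp, Set.finite_empty⟩, rfl⟩⟩
  have hSbdd : BddAbove S := by
    refine ⟨Metric.diam C, ?_⟩
    rintro _ ⟨A, ⟨hAF, hAfin⟩, rfl⟩
    obtain ⟨q, hq⟩ := hJne A hAF hAfin
    exact (Metric.infDist_le_dist_of_mem hq).trans
      (Metric.dist_le_diam_of_mem hbdd hp (hJsub A hq))
  set r : ℝ := sSup S with hr
  have hrnn : 0 ≤ r := by
    have : Metric.infDist p (J ∅) ∈ S := ⟨∅, ⟨by simp, Set.finite_empty⟩, rfl⟩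
    exact le_trans Metric.infDist_nonneg (le_csSup hSbdd this)
  have hr_le : ∀ A : Set (Set X), A ⊆ F → A.Finite → Metric.infDist p (J A) ≤ r :=
    fun A hAF hAfin => le_csSup hSbdd ⟨A, ⟨hAF, hAfin⟩, rfl⟩
  -- choose finite families almost attaining the sup
  have hAex : ∀ n : ℕ, ∃ A : Set (Set X), (A ⊆ F ∧ A.Finite) ∧
      r - 1 / (n + 1) < Metric.infDist p (J A) := by
    intro n
    have hlt : r - 1 / (n + 1) < r := by
      have : (0:ℝ) < 1 / (n + 1) := by positivity
      linarith
    obtain ⟨_, ⟨A, hA, rfl⟩, hgt⟩ := exists_lt_of_lt_csSup hSne hlt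
    exact ⟨A, hA, hgt⟩
  choose A hA1 hA2 using hAex
  set G : ℕ → Set (Set X) := fun n => ⋃ k ∈ Finset.range (n + 1), A k with hG
  have hGF : ∀ n, G n ⊆ F := by
    intro n x hx
    simp only [hG, Set.mem_iUnion] at hx
    obtain ⟨k, _, hk⟩ := hx
    exact (hA1 k).1 hk
  have hGfin : ∀ n, (G n).Finite :=
    fun n => Set.Finite.biUnion (Finset.range (n + 1)).finite_toSet fun k _ => (hA1 k).2
  have hGmono : ∀ {m n : ℕ}, m ≤ n → G m ⊆ G n := by
    intro m n hmn x hx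
    simp only [hG, Set.mem_iUnion] at hx ⊢
    obtain ⟨k, hk, hxk⟩ := hx
    exact ⟨k, Finset.mem_range.mpr (lt_of_lt_of_le (Finset.mem_range.mp hk)
      (Nat.succ_le_succ hmn)), hxk⟩
  have hAG : ∀ n, A n ⊆ G n := by
    intro n x hx
    simp only [hG, Set.mem_iUnion]
    exact ⟨n, Finset.mem_range.mpr (Nat.lt_succ_self n), hx⟩
  have hJmono : ∀ {A' A'' : Set (Set X)}, A' ⊆ A'' → J A'' ⊆ J A' := by
    intro A' A'' h x hx
    exact ⟨hx.1, Set.mem_iInter₂.mpr fun B hB => Set.mem_iInter₂.mp hx.2 B (h hB)⟩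
  set E : ℕ → Set X := fun n => J (G n) with hE
  have hEne : ∀ n, (E n).Nonempty := fun n => hJne _ (hGF n) (hGfin n)
  have hElow : ∀ n, r - 1 / (n + 1) ≤ Metric.infDist p (E n) := by
    intro n
    exact le_trans (le_of_lt (hA2 n))
      (Metric.infDist_le_infDist_of_subset (hJmono (hAG n)) (hEne n))
  have hEmono : ∀ {m n : ℕ}, m ≤ n → E n ⊆ E m := fun {m n} h => hJmono (hGmono h)
  -- choose points almost realizing the infDist
  have hxex : ∀ n : ℕ, ∃ y ∈ E n, dist p y < r + 1 / (n + 1) := by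
    intro n
    have h1 : (0:ℝ) < 1 / (n + 1) := by positivity
    have := lt_of_le_of_lt (hr_le (G n) (hGF n) (hGfin n)) (by linarith : r < r + 1 / (n + 1))
    exact (Metric.infDist_lt_iff (hEne n)).mp this
  choose x hx1 hx2 using hxex
  have heps1 : ∀ n : ℕ, (1:ℝ) / (n + 1) ≤ 1 := by
    intro n
    rw [div_le_one (by positivity)]
    have : (0:ℝ) ≤ (n : ℝ) := Nat.cast_nonneg n
    linarith
  have heps0 : ∀ n : ℕ, (0:ℝ) < 1 / (n + 1) := fun n => by positivity
  set b : ℕ → ℝ := fun N => Real.sqrt (16 * (r + 1) * (1 / (N + 1))) with hb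
  -- the generic estimate
  have hkey : ∀ (N n m : ℕ), N ≤ n → N ≤ m → ∀ u v : X, u ∈ E n → v ∈ E m →
      dist p u ≤ r + 1 / (n + 1) → dist p v ≤ r + 1 / (m + 1) → dist u v ≤ b N := by
    intro N n m hNn hNm u v hu hv hdu hdv
    have hεN := heps0 N
    have h1n : (1:ℝ) / (n + 1) ≤ 1 / (N + 1) := by
      apply one_div_le_one_div_of_le (by positivity)
      have : (N:ℝ) ≤ (n:ℝ) := Nat.cast_le.mpr hNn
      linarith
    have h1m : (1:ℝ) / (m + 1) ≤ 1 / (N + 1) := by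
      apply one_div_le_one_div_of_le (by positivity)
      have : (N:ℝ) ≤ (m:ℝ) := Nat.cast_le.mpr hNm
      linarith
    have hsq : dist u v ^ 2 ≤ 16 * (r + 1) * (1 / (N + 1)) := by
      refine dist_sq_le_aux hX (hJconv (G N) (hGF N)) (hEmono hNn hu) (hEmono hNm hv)
        hrnn hεN (heps1 N) (hElow N) (hdu.trans (by linarith)) (hdv.trans (by linarith))
    calc dist u v = Real.sqrt (dist u v ^ 2) := (Real.sqrt_sq dist_nonneg).symm
      _ ≤ b N := Real.sqrt_le_sqrt hsq
  have hbto : Filter.Tendsto b Filter.atTop (nhds 0) := by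
    have h0 : Filter.Tendsto (fun N : ℕ => 16 * (r + 1) * (1 / ((N:ℝ) + 1)))
        Filter.atTop (nhds 0) := by
      have := tendsto_one_div_add_atTop_nhds_zero_nat.const_mul (16 * (r + 1))
      simpa using this
    have := (Real.continuous_sqrt.tendsto 0).comp h0
    simpa [hb, Function.comp_def, Real.sqrt_zero] using this
  have hcauchy : CauchySeq x := by
    apply cauchySeq_of_le_tendsto_0 b _ hbto
    intro n m N hNn hNm
    exact hkey N n m hNn hNm _ _ (hx1 n) (hx1 m) (le_of_lt (hx2 n)) (le_of_lt (hx2 m))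
  obtain ⟨z, hz⟩ := cauchySeq_tendsto_of_complete hcauchy
  refine ⟨z, Set.mem_iInter₂.mpr fun B hB => ?_⟩
  -- for each B ∈ F, pick points almost minimizing in E n ∩ B
  have hyex : ∀ n : ℕ, ∃ y' ∈ J (insert B (G n)), dist p y' < r + 1 / (n + 1) := by
    intro n
    have hsub : insert B (G n) ⊆ F := Set.insert_subset hB (hGF n)
    have hfin : (insert B (G n)).Finite := (hGfin n).insert B
    have hne' : (J (insert B (G n))).Nonempty := hJne _ hsub hfin
    have h1 : (0:ℝ) < 1 / (n + 1) := by positivity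
    have := lt_of_le_of_lt (hr_le _ hsub hfin) (by linarith : r < r + 1 / (n + 1))
    exact (Metric.infDist_lt_iff hne').mp this
  choose y hy1 hy2 using hyex
  have hyE : ∀ n, y n ∈ E n := fun n => hJmono (Set.subset_insert B (G n)) (hy1 n)
  have hdxy : ∀ n, dist (x n) (y n) ≤ b n := fun n =>
    hkey n n n le_rfl le_rfl _ _ (hx1 n) (hyE n) (le_of_lt (hx2 n)) (le_of_lt (hy2 n))
  have hyz : Filter.Tendsto y Filter.atTop (nhds z) := by
    rw [tendsto_iff_dist_tendsto_zero]
    have hxz : Filter.Tendsto (fun n => dist (x n) z) Filter.atTop (nhds 0) :=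
      tendsto_iff_dist_tendsto_zero.mp hz
    have hmaj : Filter.Tendsto (fun n => b n + dist (x n) z) Filter.atTop (nhds 0) := by
      simpa using hbto.add hxz
    refine squeeze_zero (fun n => dist_nonneg) (fun n => ?_) hmaj
    calc dist (y n) z ≤ dist (y n) (x n) + dist (x n) z := dist_triangle _ _ _
      _ ≤ b n + dist (x n) z := by
          have := hdxy n; rw [dist_comm (y n) (x n)]; linarith
  have hBC : IsClosed (B ∩ C) := (hF B hB).1.inter hcl
  refine hBC.mem_of_tendsto hyz (Filter.Eventually.of_forall fun n => ?_)
  exact ⟨Set.mem_iInter₂.mp (hy1 n).2 B (Set.mem_insert B (G n)), (hy1 n).1⟩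

end Aux

/-- In a complete CAT(0) space, every nonempty bounded closed convex set is compact in the
topology `𝒯_c`; in particular every family of closed convex sets whose finite subfamilies
meet `C` has nonempty intersection with `C`. -/
theorem isCompact_Tc_of_bounded_closed_convex
    {X : Type*} [MetricSpace X] [CompleteSpace X] (hX : IsCAT0 X)
    (C : Set X) (hne : C.Nonempty) (hbdd : Bornology.IsBounded C)
    (hcl : IsClosed C) (hcv : GConvex C) :
    @IsCompact X (Tc X) C ∧
      ∀ F : Set (Set X), (∀ A ∈ F, IsClosed A ∧ GConvex A) →
        (∀ A : Set (Set X), A ⊆ F → A.Finite → (⋂ B ∈ A, B ∩ C).Nonempty) →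
        (⋂ B ∈ F, B ∩ C).Nonempty := by
  constructor
  · rw [@isCompact_iff_ultrafilter_le_nhds X (Tc X) C]
    intro f hfC
    have hC : C ∈ f := Filter.le_principal_iff.mp hfC
    set F : Set (Set X) := {D : Set X | IsClosed D ∧ GConvex D ∧ D ∈ f} with hFdef
    have hF : ∀ A ∈ F, IsClosed A ∧ GConvex A := fun A hA => ⟨hA.1, hA.2.1⟩
    have hFIP : ∀ A : Set (Set X), A ⊆ F → A.Finite → (⋂ B ∈ A, B ∩ C).Nonempty := by
      intro A hAF hAfin
      have hmem : (⋂ B ∈ A, B ∩ C) ∈ (f : Filter X) :=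
        (Filter.biInter_mem hAfin).mpr fun B hB => Filter.inter_mem (hAF hB).2.2 hC
      exact f.nonempty_of_mem hmem
    obtain ⟨z, hz⟩ := core_inter_nonempty hX C hne hbdd hcl hcv F hF hFIP
    have hzF : ∀ B ∈ F, z ∈ B ∩ C := fun B hB => Set.mem_iInter₂.mp hz B hB
    have hzC : z ∈ C := (hzF C ⟨hcl, hcv, hC⟩).2
    refine ⟨z, hzC, ?_⟩
    show ↑f ≤ @nhds X (Tc X) z
    rw [show Tc X = TopologicalSpace.generateFrom
      {U : Set X | ∃ D : Set X, IsClosed D ∧ GConvex D ∧ U = Dᶜ} from rfl,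
      TopologicalSpace.nhds_generateFrom]
    refine le_iInf₂ fun s hs => ?_
    obtain ⟨hzs, D, hDcl, hDcv, rfl⟩ := hs
    rw [Filter.le_principal_iff]
    by_contra hnot
    have hD : D ∈ f := by
      by_contra hD'
      exact hnot (Ultrafilter.compl_mem_iff_notMem.mpr hD')
    exact hzs ((hzF D ⟨hDcl, hDcv, hD⟩).1)
  · intro F hF hFIP
    exact core_inter_nonempty hX C hne hbdd hcl hcv F hF hFIP
end

section
/- Let X be a complete CAT(0) space. Then every metrically closed convex subset of X is closed for the topology 𝒯_w, the weakest topology on X making the map z ↦ d(x,z) − d(y,z) continuous for every pair of points x, y ∈ X. Consequently 𝒯_c ⊆ 𝒯_w ⊆ 𝒯, where 𝒯 is the metric topology and 𝒯_c is the weakest topology on X in which every metrically closed convex subset is closed. -/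
/-- The topology `𝒯_w`: the weakest topology on `X` making `z ↦ d(x,z) − d(y,z)`
continuous for all `x, y ∈ X`. -/
def Tw (X : Type*) [MetricSpace X] : TopologicalSpace X :=
  ⨅ p : X × X, TopologicalSpace.induced (fun z => dist p.1 z - dist p.2 z)
    (inferInstance : TopologicalSpace ℝ)
section Aux

variable {X : Type*} [MetricSpace X]

lemma midpoint_mem {C : Set X} (hgeo : IsGeodesicSpace X) (hconv : GConvex C)
    {u v : X} (hu : u ∈ C) (hv : v ∈ C) :
    ∃ m ∈ C, dist m u = dist u v / 2 ∧ dist m v = dist u v / 2 := by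
  obtain ⟨σ, hσ, h0, h1⟩ := hgeo u v
  have hd0 : 0 ≤ dist u v := dist_nonneg
  set d := dist u v with hd
  have hmem : d / 2 ∈ Set.Icc (0:ℝ) d := ⟨by linarith, by linarith⟩
  refine ⟨σ (d/2), hconv σ 0 d hd0 hσ (by rw [h0]; exact hu) (by rw [h1]; exact hv) _ hmem,
    ?_, ?_⟩
  · rw [← h0, hσ (d/2) hmem 0 ⟨le_refl 0, hd0⟩, sub_zero, abs_of_nonneg (by linarith)]
  · rw [← h1, hσ (d/2) hmem d ⟨hd0, le_refl d⟩, abs_of_nonpos (by linarith)]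
    ring

lemma exists_proj [CompleteSpace X] (hX : IsCAT0 X) {C : Set X}
    (hC : IsClosed C) (hconv : GConvex C) (hne : C.Nonempty) (x : X) :
    ∃ p ∈ C, ∀ z ∈ C, dist x p ≤ dist x z := by
  set d := Metric.infDist x C with hdd
  have hd0 : 0 ≤ d := Metric.infDist_nonneg
  have hδpos : ∀ n : ℕ, (0:ℝ) < 1/(n+1) := fun n => by positivity
  have hseq : ∀ n : ℕ, ∃ c ∈ C, dist x c < d + 1/(n+1) := by
    intro n
    exact (Metric.infDist_lt_iff hne).mp (by have := hδpos n; linarith)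
  choose c hcC hcd using hseq
  have hδmono : ∀ N n : ℕ, N ≤ n → (1:ℝ)/(n+1) ≤ 1/(N+1) := by
    intro N n h
    apply one_div_le_one_div_of_le (by positivity)
    have : (N:ℝ) ≤ n := Nat.cast_le.mpr h
    linarith
  have hlow : ∀ n, d ≤ dist x (c n) := fun n => Metric.infDist_le_dist_of_mem (hcC n)
  have key : ∀ N n m : ℕ, N ≤ n → N ≤ m →
      dist (c n) (c m) ≤ Real.sqrt (4 * (2*d*(1/(N+1)) + (1/(N+1))^2)) := by
    intro N n m hn hm
    obtain ⟨q, hqC, hq1, hq2⟩ := midpoint_mem hX.1 hconv (hcC n) (hcC m)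
    have cn := hX.2 x (c n) (c m) q hq1 hq2
    have hdq : d ≤ dist q x := by
      rw [dist_comm]; exact Metric.infDist_le_dist_of_mem hqC
    have hAn : dist x (c n) < d + 1/(N+1) := lt_of_lt_of_le (hcd n) (by linarith [hδmono N n hn])
    have hAm : dist x (c m) < d + 1/(N+1) := lt_of_lt_of_le (hcd m) (by linarith [hδmono N m hm])
    have hA0 : 0 ≤ dist x (c n) := dist_nonneg
    have hB0 : 0 ≤ dist x (c m) := dist_nonneg
    have hsq : dist (c n) (c m) ^ 2 ≤ 4 * (2*d*(1/(N+1)) + (1/(N+1))^2) := by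
      have e1 : dist (c m) x = dist x (c m) := dist_comm _ _
      have e2 : dist (c n) x = dist x (c n) := dist_comm _ _
      have e3 : dist (c m) (c n) = dist (c n) (c m) := dist_comm _ _
      rw [e1, e2, e3] at cn
      nlinarith [sq_nonneg (dist q x - d), mul_self_nonneg (dist x (c n) - d),
        mul_self_nonneg (dist x (c m) - d), hδpos N]
    calc dist (c n) (c m) = Real.sqrt (dist (c n) (c m) ^ 2) := by
          rw [Real.sqrt_sq dist_nonneg]
      _ ≤ Real.sqrt (4 * (2*d*(1/(N+1)) + (1/(N+1))^2)) := Real.sqrt_le_sqrt hsq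
  have hb0 : Filter.Tendsto (fun N : ℕ => Real.sqrt (4 * (2*d*(1/(N+1)) + (1/(N+1))^2)))
      Filter.atTop (nhds 0) := by
    have hδ : Filter.Tendsto (fun N : ℕ => (1:ℝ)/(N+1)) Filter.atTop (nhds 0) :=
      tendsto_one_div_add_atTop_nhds_zero_nat
    have : Filter.Tendsto (fun N : ℕ => 4 * (2*d*(1/(N+1)) + (1/(N+1))^2))
        Filter.atTop (nhds 0) := by
      have := ((hδ.const_mul (2*d)).add (hδ.pow 2)).const_mul 4
      simpa using this
    simpa using this.sqrt
  have hcauchy : CauchySeq c :=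
    cauchySeq_of_le_tendsto_0 _ (fun n m N hn hm => key N n m hn hm) hb0
  obtain ⟨p, hp⟩ := cauchySeq_tendsto_of_complete hcauchy
  have hpC : p ∈ C := hC.mem_of_tendsto hp (Filter.Eventually.of_forall hcC)
  have hdist : dist x p = d := by
    have h1 : Filter.Tendsto (fun n => dist x (c n)) Filter.atTop (nhds (dist x p)) :=
      Filter.Tendsto.dist tendsto_const_nhds hp
    have h2 : Filter.Tendsto (fun n => dist x (c n)) Filter.atTop (nhds d) := by
      refine tendsto_of_tendsto_of_tendsto_of_le_of_le (g := fun _ : ℕ => d)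
        (h := fun n : ℕ => d + 1/(n+1)) tendsto_const_nhds ?_ hlow
        (fun n => le_of_lt (hcd n))
      have := (tendsto_one_div_add_atTop_nhds_zero_nat).const_add d
      simpa using this
    exact tendsto_nhds_unique h1 h2
  exact ⟨p, hpC, fun z hz => by rw [hdist]; exact Metric.infDist_le_dist_of_mem hz⟩

lemma proj_pythagoras (hX : IsCAT0 X) {C : Set X} (hconv : GConvex C)
    {x p : X} (hp : p ∈ C) (hmin : ∀ z ∈ C, dist x p ≤ dist x z)
    {z : X} (hz : z ∈ C) : dist p z ≤ dist x z := by
  set a := dist x p with ha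
  set b := dist p z with hb
  have key : ∀ n : ℕ, ∃ w ∈ C, dist p w = b / 2^n ∧
      (1 - (1/2:ℝ)^n) * b^2 + 2^n * (dist x w ^2 - a^2) ≤ dist x z ^2 - a^2 := by
    intro n
    induction n with
    | zero => exact ⟨z, hz, by simp [hb], by simp⟩
    | succ n ih =>
      obtain ⟨w, hwC, hw, hle⟩ := ih
      obtain ⟨m, hmC, hm1, hm2⟩ := midpoint_mem hX.1 hconv hp hwC
      have cn := hX.2 x p w m hm1 hm2
      have hE : (0:ℝ) < 2^n := by positivity
      have hEe : ((1:ℝ)/2)^n * 2^n = 1 := by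
        rw [← mul_pow]; norm_num
      refine ⟨m, hmC, by rw [dist_comm p m, hm1, hw, pow_succ, div_div], ?_⟩
      have e0 : dist m x = dist x m := dist_comm _ _
      have e1 : dist w x = dist x w := dist_comm _ _
      have e2 : dist p x = a := dist_comm _ _
      have e3 : dist w p = b / 2^n := by rw [dist_comm]; exact hw
      rw [e0, e1, e2, e3] at cn
      have h2n : (2:ℝ)^n ≠ 0 := ne_of_gt hE
      have hsq : (2:ℝ)^n * ((b/2^n)^2/2) = b^2 * (1/2:ℝ)^n / 2 := by
        field_simp
        linear_combination (-b^2) * hEe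
      have h1 : (2:ℝ)^n * (2 * dist x m ^2 - 2*a^2 + (b/2^n)^2/2)
          ≤ 2^n * (dist x w ^2 - a^2) :=
        mul_le_mul_of_nonneg_left (by linarith [cn]) (le_of_lt hE)
      have expand : (2:ℝ)^n * (2 * dist x m ^2 - 2*a^2 + (b/2^n)^2/2)
          = 2^(n+1) * (dist x m ^2 - a^2) + 2^n * ((b/2^n)^2/2) := by ring
      rw [expand, hsq] at h1
      have hps : ((1:ℝ)/2)^(n+1) = (1/2:ℝ)^n/2 := by rw [pow_succ]; ring
      rw [hps]
      nlinarith [h1, hle]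
  have hfor : ∀ n : ℕ, (1 - (1/2:ℝ)^n) * b^2 ≤ dist x z ^2 := by
    intro n
    obtain ⟨w, hwC, _, hle⟩ := key n
    have haw : a ≤ dist x w := hmin w hwC
    have : (0:ℝ) ≤ 2^n * (dist x w ^2 - a^2) := by
      apply mul_nonneg (by positivity)
      nlinarith [dist_nonneg (x := x) (y := p)]
    nlinarith [hle, sq_nonneg a]
  have hlim : Filter.Tendsto (fun n : ℕ => (1 - (1/2:ℝ)^n) * b^2)
      Filter.atTop (nhds (b^2)) := by
    have h2 : Filter.Tendsto (fun n : ℕ => ((1/2:ℝ))^n) Filter.atTop (nhds 0) := by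
      apply tendsto_pow_atTop_nhds_zero_of_lt_one <;> norm_num
    have := ((tendsto_const_nhds (x := (1:ℝ))).sub h2).mul_const (b^2)
    simpa using this
  have hb2 : b^2 ≤ dist x z ^2 := le_of_tendsto hlim (Filter.Eventually.of_forall hfor)
  calc b = Real.sqrt (b^2) := (Real.sqrt_sq dist_nonneg).symm
    _ ≤ Real.sqrt (dist x z ^2) := Real.sqrt_le_sqrt hb2
    _ = dist x z := Real.sqrt_sq dist_nonneg

end Aux

/-- In a complete CAT(0) space, every metrically closed convex set is `𝒯_w`-closed;
consequently `𝒯_c ⊆ 𝒯_w ⊆ 𝒯` (recall that in Mathlib's order on topologies,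
`t ≤ s` means that `t` is finer than `s`). -/
theorem closedConvex_isClosed_Tw
    {X : Type*} [MetricSpace X] [CompleteSpace X] (hX : IsCAT0 X) :
    (∀ C : Set X, IsClosed C → GConvex C → @IsClosed X (Tw X) C) ∧
      Tw X ≤ Tc X ∧ (inferInstance : TopologicalSpace X) ≤ Tw X := by
  have hUopen : ∀ x y : X, @IsOpen X (Tw X) ((fun z => dist x z - dist y z) ⁻¹' Set.Iio 0) := by
    intro x y
    have hle : Tw X ≤ TopologicalSpace.induced (fun z => dist x z - dist y z)
        (inferInstance : TopologicalSpace ℝ) := iInf_le _ ((x, y) : X × X)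
    exact IsOpen.mono (isOpen_induced (isOpen_Iio (a := (0:ℝ)))) hle
  have part1 : ∀ C : Set X, IsClosed C → GConvex C → @IsClosed X (Tw X) C := by
    intro C hC hconv
    rcases Set.eq_empty_or_nonempty C with rfl | hne
    · exact @isClosed_empty X (Tw X)
    · have hproj := fun x : X => exists_proj hX hC hconv hne x
      choose p hpC hpmin using hproj
      have hcover : Cᶜ = ⋃ x ∈ Cᶜ, (fun z => dist x z - dist (p x) z) ⁻¹' Set.Iio 0 := by
        ext w
        constructor
        · intro hw
          refine Set.mem_biUnion hw ?_
          have hne' : w ≠ p w := fun h => hw (h ▸ hpC w)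
          show dist w w - dist (p w) w < 0
          rw [dist_self]
          have := dist_pos.mpr hne'
          rw [dist_comm] at this
          linarith
        · intro hw
          obtain ⟨x, hx, hwx⟩ := Set.mem_iUnion₂.mp hw
          intro hwC
          have h1 : dist (p x) w ≤ dist x w := proj_pythagoras hX hconv (hpC x) (hpmin x) hwC
          simp only [Set.mem_preimage, Set.mem_Iio] at hwx
          linarith
      have : @IsOpen X (Tw X) Cᶜ := by
        rw [hcover, ← Set.sUnion_image]
        exact (Tw X).isOpen_sUnion _
          (fun t ht => by obtain ⟨x, hx, rfl⟩ := ht; exact hUopen x (p x))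
      exact (@isOpen_compl_iff X C (Tw X)).mp this
  refine ⟨part1, ?_, ?_⟩
  · apply le_generateFrom
    rintro U ⟨C, hC, hconv, rfl⟩
    exact (@isOpen_compl_iff X C (Tw X)).mpr (part1 C hC hconv)
  · refine le_iInf fun q => ?_
    exact continuous_iff_le_induced.mp
      ((continuous_const.dist continuous_id).sub (continuous_const.dist continuous_id))
end

section
/- Let X be a CAT(0) space and K ⊆ X a subset that is compact for the metric topology 𝒯. Then the subspace topologies induced on K by 𝒯 and by 𝒯_c coincide, where 𝒯_c is the weakest topology on X in which every metrically closed convex subset of X is closed. -/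
/-!
Closed balls of a CAT(0) space are convex (the CN inequality bounds the distance from a
midpoint to the centre), hence `𝒯_c`-closed. A metrically compact set `F` is then
`𝒯_c`-closed: a point off `F` is separated from it by a finite union of small closed balls
covering `F`. So on a compact `K` every metrically closed subset, being compact, is
`𝒯_c`-closed, and `𝒯_c` is coarser than the metric topology anyway.
-/

open Metric Set Topology

theorem Icc_subset_of_isClosed_of_midpoint_mem {S : Set ℝ} (hS : IsClosed S)
    (hmid : ∀ x ∈ S, ∀ y ∈ S, (x + y) / 2 ∈ S) {a b : ℝ} (ha : a ∈ S) (hb : b ∈ S) :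
    Icc a b ⊆ S := by
  intro t ht
  -- `u ≤ t ≤ v` are the points of `S` nearest to `t`; their midpoint forces `u = v`.
  have huS : sSup (S ∩ Iic t) ∈ S ∩ Iic t :=
    (hS.inter isClosed_Iic).csSup_mem ⟨a, ha, ht.1⟩ ⟨t, fun _ hs => hs.2⟩
  have hvS : sInf (S ∩ Ici t) ∈ S ∩ Ici t :=
    (hS.inter isClosed_Ici).csInf_mem ⟨b, hb, ht.2⟩ ⟨t, fun _ hs => hs.2⟩
  set u := sSup (S ∩ Iic t)
  set v := sInf (S ∩ Ici t)
  have hmS : (u + v) / 2 ∈ S := hmid u huS.1 v hvS.1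
  have hvu : v ≤ u := by
    rcases le_total ((u + v) / 2) t with hle | hge
    · have : (u + v) / 2 ≤ u := le_csSup ⟨t, fun _ hs => hs.2⟩ ⟨hmS, hle⟩
      linarith
    · have : v ≤ (u + v) / 2 := csInf_le ⟨t, fun _ hs => hs.2⟩ ⟨hmS, hge⟩
      linarith
  have htu : t = u := le_antisymm (by linarith [show t ≤ v from hvS.2]) huS.2
  exact htu ▸ huS.1

section

variable {X : Type*} [MetricSpace X]

theorem IsGeodesicOn.continuousOn {σ : ℝ → X} {a b : ℝ} (hσ : IsGeodesicOn σ a b) :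
    ContinuousOn σ (Icc a b) :=
  (LipschitzOnWith.mk_one fun s hs t ht => by rw [hσ s hs t ht, Real.dist_eq]).continuousOn

theorem IsGeodesicOn.dist_midpoint {σ : ℝ → X} {a b : ℝ} (hσ : IsGeodesicOn σ a b)
    {s t : ℝ} (hs : s ∈ Icc a b) (ht : t ∈ Icc a b) :
    dist (σ ((s + t) / 2)) (σ s) = dist (σ s) (σ t) / 2 ∧
      dist (σ ((s + t) / 2)) (σ t) = dist (σ s) (σ t) / 2 := by
  have hm : (s + t) / 2 ∈ Icc a b := ⟨by linarith [hs.1, ht.1], by linarith [hs.2, ht.2]⟩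
  rw [hσ _ hm s hs, hσ _ hm t ht, hσ s hs t ht]
  constructor
  · rw [show (s + t) / 2 - s = (t - s) / 2 by ring, abs_div, abs_sub_comm, abs_two]
  · rw [show (s + t) / 2 - t = (s - t) / 2 by ring, abs_div, abs_two]

theorem IsCAT0.dist_le_of_midpoint {x c c' m : X} {r : ℝ} (hX : IsCAT0 X)
    (hmc : dist m c = dist c c' / 2) (hmc' : dist m c' = dist c c' / 2)
    (hc : dist c x ≤ r) (hc' : dist c' x ≤ r) : dist m x ≤ r := by
  have hCN := hX.2 x c c' m hmc hmc'
  nlinarith [dist_nonneg (x := m) (y := x), dist_nonneg (x := c') (y := c),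
    dist_nonneg (x := c) (y := x), dist_nonneg (x := c') (y := x)]

theorem IsCAT0.gconvex_closedBall (hX : IsCAT0 X) (x : X) (r : ℝ) :
    GConvex (closedBall x r) := by
  intro σ a b hab hσ ha hb
  have hS : IsClosed (Icc a b ∩ σ ⁻¹' closedBall x r) :=
    hσ.continuousOn.preimage_isClosed_of_isClosed isClosed_Icc isClosed_closedBall
  have hmid : ∀ s ∈ Icc a b ∩ σ ⁻¹' closedBall x r, ∀ t ∈ Icc a b ∩ σ ⁻¹' closedBall x r,
      (s + t) / 2 ∈ Icc a b ∩ σ ⁻¹' closedBall x r := by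
    rintro s ⟨hs, hsx⟩ t ⟨ht, htx⟩
    obtain ⟨hms, hmt⟩ := hσ.dist_midpoint hs ht
    exact ⟨⟨by linarith [hs.1, ht.1], by linarith [hs.2, ht.2]⟩,
      hX.dist_le_of_midpoint hms hmt hsx htx⟩
  exact fun t ht => (Icc_subset_of_isClosed_of_midpoint_mem hS hmid
    ⟨left_mem_Icc.2 hab, ha⟩ ⟨right_mem_Icc.2 hab, hb⟩ ht).2

theorem isClosed_Tc_of_gconvex {C : Set X} (hC : IsClosed C) (hconv : GConvex C) :
    IsClosed[Tc X] C :=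
  (@isOpen_compl_iff X _ (Tc X)).1 (TopologicalSpace.GenerateOpen.basic _ ⟨C, hC, hconv, rfl⟩)

theorem le_Tc : (inferInstance : TopologicalSpace X) ≤ Tc X :=
  le_generateFrom fun _ ⟨_, hC, _, hU⟩ => hU ▸ hC.isOpen_compl

theorem IsCompact.exists_finite_closedBall_cover_notMem {F : Set X} (hF : IsCompact F) {p : X}
    (hp : p ∉ F) : ∃ s : Set X, ∃ ε : ℝ,
      s.Finite ∧ F ⊆ ⋃ q ∈ s, closedBall q ε ∧ p ∉ ⋃ q ∈ s, closedBall q ε := by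
  obtain ⟨ε, hε, hball_p⟩ := Metric.isOpen_iff.1 hF.isClosed.isOpen_compl p hp
  obtain ⟨s, hsF, hsfin, hcover⟩ := hF.finite_cover_balls (half_pos hε)
  refine ⟨s, ε / 2, hsfin, hcover.trans (iUnion₂_mono fun _ _ => ball_subset_closedBall), ?_⟩
  simp only [mem_iUnion₂, mem_closedBall, not_exists]
  intro q hq hpq
  exact hball_p (mem_ball'.2 (by linarith)) (hsF hq)

theorem IsCompact.isClosed_of_forall_isClosed_closedBall {F : Set X} (hF : IsCompact F)
    {t : TopologicalSpace X} (hball : ∀ x r, IsClosed[t] (closedBall x r)) : IsClosed[t] F := by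
  rw [← @isOpen_compl_iff X _ t, @isOpen_iff_forall_mem_open X t]
  intro p hp
  obtain ⟨s, ε, hsfin, hcover, hp_cover⟩ := hF.exists_finite_closedBall_cover_notMem hp
  exact ⟨_, compl_subset_compl.2 hcover,
    (@isOpen_compl_iff X _ t).2 (@Finite.isClosed_biUnion X X t s _ hsfin fun q _ => hball q ε),
    hp_cover⟩

theorem IsCAT0.isClosed_Tc_of_isCompact (hX : IsCAT0 X) {F : Set X} (hF : IsCompact F) :
    IsClosed[Tc X] F :=
  hF.isClosed_of_forall_isClosed_closedBall fun x r =>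
    isClosed_Tc_of_gconvex isClosed_closedBall (hX.gconvex_closedBall x r)

end

theorem induced_eq_of_forall_isCompact_isClosed {X : Type*} {τ t : TopologicalSpace X}
    (hle : τ ≤ t) (hcpt : ∀ F : Set X, @IsCompact X τ F → IsClosed[t] F) {K : Set X}
    (hK : @IsCompact X τ K) :
    TopologicalSpace.induced ((↑) : K → X) t = TopologicalSpace.induced ((↑) : K → X) τ := by
  refine le_antisymm (fun U hU => ?_) (induced_mono hle)
  -- make `τ` the instance behind `CompactSpace K` and the subspace topology of `K`
  let _ := τ
  have : CompactSpace K := isCompact_iff_compactSpace.1 hK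
  have himage : IsClosed[t] (((↑) : K → X) '' Uᶜ) :=
    hcpt _ ((IsOpen.isClosed_compl hU).isCompact.image continuous_subtype_val)
  refine (@isOpen_induced_iff _ _ t _ _).2 ⟨_, (@isOpen_compl_iff X _ t).2 himage, ?_⟩
  rw [preimage_compl, Subtype.val_injective.preimage_image, compl_compl]

/-- On a metrically compact subset of a CAT(0) space, the subspace topologies induced
by the metric topology and by `𝒯_c` coincide. -/
theorem Tc_eq_metric_on_compact
    {X : Type*} [MetricSpace X] (hX : IsCAT0 X) (K : Set X) (hK : IsCompact K) :
    TopologicalSpace.induced (Subtype.val : K → X) (Tc X) =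
      TopologicalSpace.induced (Subtype.val : K → X) (inferInstance : TopologicalSpace X) :=
  induced_eq_of_forall_isCompact_isClosed le_Tc (fun _ hF => hX.isClosed_Tc_of_isCompact hF) hK
end

section
/- Let G₁ and G₂ be topological groups, let X₁ and X₂ be unbounded CAT(0) spaces, each Xᵢ equipped with a continuous action of Gᵢ by isometries, and let X = X₁ ×₂ X₂ be the ℓ²-product equipped with the product action of G = G₁ × G₂. Then: (i) for each i, the action of Gᵢ on X (acting on the factor Xᵢ and trivially on the other factor) is evanescent; (ii) the G-action on X is evanescent (respectively weakly evanescent) if and only if at least one of the Gᵢ-actions on Xᵢ is evanescent (respectively weakly evanescent). -/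
open scoped ENNReal

/-- The product action of `G₁ × G₂` on the `ℓ²`-product `X₁ ×₂ X₂`. -/
noncomputable def prodAction {G₁ G₂ X₁ X₂ : Type*} (ρ₁ : G₁ → X₁ → X₁) (ρ₂ : G₂ → X₂ → X₂) :
    (G₁ × G₂) → WithLp 2 (X₁ × X₂) → WithLp 2 (X₁ × X₂) := fun g x =>
  (WithLp.equiv 2 (X₁ × X₂)).symm
    (ρ₁ g.1 ((WithLp.equiv 2 (X₁ × X₂)) x).1, ρ₂ g.2 ((WithLp.equiv 2 (X₁ × X₂)) x).2)

/-!
A displacement in the `ℓ²`-product is squeezed between the displacements of the two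
coordinates: `max (d₁, d₂) ≤ d ≤ d₁ + d₂`, and a subset of the product is bounded iff both of its
projections are. Hence an unbounded evanescent set of the product projects to an unbounded
evanescent set of one factor; conversely an unbounded evanescent set `T₁` of a factor gives the
unbounded evanescent set `T₁ × {o₂}`, because by continuity a compact set of group elements moves
the single point `o₂` a bounded amount. The same fibres `{o₁} × X₂` show that `G₁`, acting
trivially on the unbounded factor `X₂`, is evanescent on the product.
-/

open Bornology Set WithLp

namespace WithLp

variable {α β : Type*}

lemma prod_isBounded_iff [Bornology α] [Bornology β] {p : ℝ≥0∞} {T : Set (WithLp p (α × β))} :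
    IsBounded T ↔ IsBounded (WithLp.fst '' T) ∧ IsBounded (WithLp.snd '' T) := by
  refine isBounded_induced.trans ?_
  rw [← isBounded_image_fst_and_snd, image_image, image_image]
  rfl

lemma prod_not_isBounded_fst_or_snd [Bornology α] [Bornology β] {p : ℝ≥0∞}
    {T : Set (WithLp p (α × β))} (hT : ¬IsBounded T) :
    ¬IsBounded (WithLp.fst '' T) ∨ ¬IsBounded (WithLp.snd '' T) := by
  rw [prod_isBounded_iff] at hT
  tauto

lemma not_isBounded_toLp_image_prod_left [Bornology α] [Bornology β] {p : ℝ≥0∞}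
    {T₁ : Set α} {T₂ : Set β} (hT₁ : ¬IsBounded T₁) (hT₂ : T₂.Nonempty) :
    ¬IsBounded (toLp p '' (T₁ ×ˢ T₂)) := fun h ↦
  hT₁ <| by simpa [image_image, fst_image_prod _ hT₂] using (prod_isBounded_iff.mp h).1

lemma not_isBounded_toLp_image_prod_right [Bornology α] [Bornology β] {p : ℝ≥0∞}
    {T₁ : Set α} {T₂ : Set β} (hT₁ : T₁.Nonempty) (hT₂ : ¬IsBounded T₂) :
    ¬IsBounded (toLp p '' (T₁ ×ˢ T₂)) := fun h ↦
  hT₂ <| by simpa [image_image, snd_image_prod hT₁] using (prod_isBounded_iff.mp h).2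

lemma prod_dist_le_dist_fst_add_dist_snd [PseudoMetricSpace α] [PseudoMetricSpace β]
    (x y : WithLp 2 (α × β)) : dist x y ≤ dist x.fst y.fst + dist x.snd y.snd := by
  have h2 : (2 : ℝ≥0∞).toReal = 2 := by norm_num
  rw [prod_dist_eq_add (by norm_num), h2, ← Real.sqrt_eq_rpow, Real.rpow_two, Real.rpow_two,
    Real.sqrt_le_left (by positivity)]
  nlinarith [dist_nonneg (x := x.fst) (y := y.fst), dist_nonneg (x := x.snd) (y := y.snd)]

end WithLp

namespace QEvanescent

variable {G H X : Type*} [MetricSpace X] {ρ : G → X → X} {Q : Set G} {T : Set X}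

lemma subset (h : QEvanescent ρ Q T) {Q' : Set G} (hQ : Q' ⊆ Q) : QEvanescent ρ Q' T :=
  let ⟨C, hC⟩ := h
  ⟨C, fun g hg ↦ hC g (hQ hg)⟩

lemma comp (h : QEvanescent ρ Q T) {f : H → G} {Q' : Set H} (hf : MapsTo f Q' Q) :
    QEvanescent (fun g ↦ ρ (f g)) Q' T :=
  let ⟨C, hC⟩ := h
  ⟨C, fun g hg ↦ hC (f g) (hf hg)⟩

end QEvanescent

lemma qEvanescent_singleton_of_isCompact {G X : Type*} [TopologicalSpace G] [MetricSpace X]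
    {ρ : G → X → X} {Q : Set G} (hQ : IsCompact Q) {x : X}
    (hcont : Continuous fun g ↦ ρ g x) : QEvanescent ρ Q {x} := by
  obtain ⟨C, hC⟩ := (hQ.image (hcont.dist continuous_const)).bddAbove
  exact ⟨C, fun g hg _ hy ↦ hy ▸ hC (mem_image_of_mem _ hg)⟩

lemma qEvanescent_one_univ {G X : Type*} [One G] [MetricSpace X] {ρ : G → X → X}
    (h : ∀ x, ρ 1 x = x) : QEvanescent ρ {1} univ :=
  ⟨0, by rintro g rfl x -; rw [h, dist_self]⟩

section prodAction

variable {G₁ G₂ X₁ X₂ : Type*} [MetricSpace X₁] [MetricSpace X₂]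
  {ρ₁ : G₁ → X₁ → X₁} {ρ₂ : G₂ → X₂ → X₂}

lemma QEvanescent.prod {Q₁ : Set G₁} {Q₂ : Set G₂} {T₁ : Set X₁} {T₂ : Set X₂}
    (h₁ : QEvanescent ρ₁ Q₁ T₁) (h₂ : QEvanescent ρ₂ Q₂ T₂) :
    QEvanescent (prodAction ρ₁ ρ₂) (Q₁ ×ˢ Q₂) (toLp 2 '' (T₁ ×ˢ T₂)) := by
  obtain ⟨C₁, hC₁⟩ := h₁
  obtain ⟨C₂, hC₂⟩ := h₂
  refine ⟨C₁ + C₂, ?_⟩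
  rintro g ⟨hg₁, hg₂⟩ _ ⟨x, ⟨hx₁, hx₂⟩, rfl⟩
  exact (prod_dist_le_dist_fst_add_dist_snd _ _).trans
    (add_le_add (hC₁ _ hg₁ _ hx₁) (hC₂ _ hg₂ _ hx₂))

lemma QEvanescent.fst_of_prodAction {Q : Set (G₁ × G₂)} {T : Set (WithLp 2 (X₁ × X₂))}
    (h : QEvanescent (prodAction ρ₁ ρ₂) Q T) :
    QEvanescent ρ₁ (Prod.fst '' Q) (WithLp.fst '' T) := by
  obtain ⟨C, hC⟩ := h
  refine ⟨C, ?_⟩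
  rintro _ ⟨g, hg, rfl⟩ _ ⟨x, hx, rfl⟩
  exact (dist_fst_le _ _).trans (hC g hg x hx)

lemma QEvanescent.snd_of_prodAction {Q : Set (G₁ × G₂)} {T : Set (WithLp 2 (X₁ × X₂))}
    (h : QEvanescent (prodAction ρ₁ ρ₂) Q T) :
    QEvanescent ρ₂ (Prod.snd '' Q) (WithLp.snd '' T) := by
  obtain ⟨C, hC⟩ := h
  refine ⟨C, ?_⟩
  rintro _ ⟨g, hg, rfl⟩ _ ⟨x, hx, rfl⟩
  exact (dist_snd_le _ _).trans (hC g hg x hx)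

lemma evanescent_prodAction_left [TopologicalSpace G₁] [One G₂] {o₁ : X₁}
    (hcont : Continuous fun g ↦ ρ₁ g o₁) (hone : ∀ x, ρ₂ 1 x = x) (hub : ¬IsBounded (univ : Set X₂)) :
    Evanescent fun (g : G₁) (x : WithLp 2 (X₁ × X₂)) ↦ prodAction ρ₁ ρ₂ (g, 1) x :=
  ⟨_, not_isBounded_toLp_image_prod_right (singleton_nonempty o₁) hub, fun _ hQ ↦
    ((qEvanescent_singleton_of_isCompact hQ hcont).prod (qEvanescent_one_univ hone)).comp
      fun _ hg ↦ ⟨hg, rfl⟩⟩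

lemma evanescent_prodAction_right [One G₁] [TopologicalSpace G₂] {o₂ : X₂}
    (hcont : Continuous fun g ↦ ρ₂ g o₂) (hone : ∀ x, ρ₁ 1 x = x) (hub : ¬IsBounded (univ : Set X₁)) :
    Evanescent fun (g : G₂) (x : WithLp 2 (X₁ × X₂)) ↦ prodAction ρ₁ ρ₂ (1, g) x :=
  ⟨_, not_isBounded_toLp_image_prod_left hub (singleton_nonempty o₂), fun _ hQ ↦
    ((qEvanescent_one_univ hone).prod (qEvanescent_singleton_of_isCompact hQ hcont)).comp
      fun _ hg ↦ ⟨rfl, hg⟩⟩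

variable [TopologicalSpace G₁] [TopologicalSpace G₂]

lemma QEvanescent.prodAction_of_fst {Q : Set (G₁ × G₂)} (hQ : IsCompact Q) {T₁ : Set X₁}
    (h : QEvanescent ρ₁ (Prod.fst '' Q) T₁) {o₂ : X₂}
    (hcont : Continuous fun g ↦ ρ₂ g o₂) :
    QEvanescent (prodAction ρ₁ ρ₂) Q (toLp 2 '' (T₁ ×ˢ {o₂})) :=
  (h.prod (qEvanescent_singleton_of_isCompact (hQ.image continuous_snd) hcont)).subset
    subset_prod

lemma QEvanescent.prodAction_of_snd {Q : Set (G₁ × G₂)} (hQ : IsCompact Q) {T₂ : Set X₂}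
    (h : QEvanescent ρ₂ (Prod.snd '' Q) T₂) {o₁ : X₁}
    (hcont : Continuous fun g ↦ ρ₁ g o₁) :
    QEvanescent (prodAction ρ₁ ρ₂) Q (toLp 2 '' ({o₁} ×ˢ T₂)) :=
  ((qEvanescent_singleton_of_isCompact (hQ.image continuous_fst) hcont).prod h).subset
    subset_prod

lemma Evanescent.prodAction_of_left {o₂ : X₂} (hcont : Continuous fun g ↦ ρ₂ g o₂)
    (h : Evanescent ρ₁) : Evanescent (prodAction ρ₁ ρ₂) :=
  let ⟨_, hT₁, hQ₁⟩ := h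
  ⟨_, not_isBounded_toLp_image_prod_left hT₁ (singleton_nonempty o₂),
    fun _ hQ ↦ (hQ₁ _ (hQ.image continuous_fst)).prodAction_of_fst hQ hcont⟩

lemma Evanescent.prodAction_of_right {o₁ : X₁} (hcont : Continuous fun g ↦ ρ₁ g o₁)
    (h : Evanescent ρ₂) : Evanescent (prodAction ρ₁ ρ₂) :=
  let ⟨_, hT₂, hQ₂⟩ := h
  ⟨_, not_isBounded_toLp_image_prod_right (singleton_nonempty o₁) hT₂,
    fun _ hQ ↦ (hQ₂ _ (hQ.image continuous_snd)).prodAction_of_snd hQ hcont⟩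

lemma WeaklyEvanescent.prodAction_of_left {o₂ : X₂} (hcont : Continuous fun g ↦ ρ₂ g o₂)
    (h : WeaklyEvanescent ρ₁) : WeaklyEvanescent (prodAction ρ₁ ρ₂) := fun _ hQ ↦
  let ⟨_, hT₁, hQT₁⟩ := h _ (hQ.image continuous_fst)
  ⟨_, not_isBounded_toLp_image_prod_left hT₁ (singleton_nonempty o₂),
    hQT₁.prodAction_of_fst hQ hcont⟩

lemma WeaklyEvanescent.prodAction_of_right {o₁ : X₁} (hcont : Continuous fun g ↦ ρ₁ g o₁)
    (h : WeaklyEvanescent ρ₂) : WeaklyEvanescent (prodAction ρ₁ ρ₂) := fun _ hQ ↦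
  let ⟨_, hT₂, hQT₂⟩ := h _ (hQ.image continuous_snd)
  ⟨_, not_isBounded_toLp_image_prod_right (singleton_nonempty o₁) hT₂,
    hQT₂.prodAction_of_snd hQ hcont⟩

lemma Evanescent.of_prodAction [Nonempty G₁] [Nonempty G₂]
    (h : Evanescent (prodAction ρ₁ ρ₂)) : Evanescent ρ₁ ∨ Evanescent ρ₂ := by
  obtain ⟨T, hT, hQT⟩ := h
  obtain ⟨a⟩ := ‹Nonempty G₁›
  obtain ⟨b⟩ := ‹Nonempty G₂›
  rcases prod_not_isBounded_fst_or_snd hT with hT₁ | hT₂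
  · refine .inl ⟨_, hT₁, fun Q hQ ↦ ?_⟩
    exact (hQT _ (hQ.prod isCompact_singleton)).fst_of_prodAction.subset
      (fst_image_prod Q (singleton_nonempty b)).ge
  · refine .inr ⟨_, hT₂, fun Q hQ ↦ ?_⟩
    exact (hQT _ (isCompact_singleton.prod hQ)).snd_of_prodAction.subset
      (snd_image_prod (singleton_nonempty a) Q).ge

lemma WeaklyEvanescent.of_prodAction [Nonempty G₁] [Nonempty G₂]
    (h : WeaklyEvanescent (prodAction ρ₁ ρ₂)) : WeaklyEvanescent ρ₁ ∨ WeaklyEvanescent ρ₂ := by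
  by_contra! hcon
  simp only [WeaklyEvanescent, not_forall, not_exists, not_and] at hcon
  obtain ⟨⟨Q₁, hQ₁, hQT₁⟩, ⟨Q₂, hQ₂, hQT₂⟩⟩ := hcon
  obtain ⟨a⟩ := ‹Nonempty G₁›
  obtain ⟨b⟩ := ‹Nonempty G₂›
  -- the inserted points keep `Qᵢ` inside a projection of the product even when `Qⱼ = ∅`
  obtain ⟨T, hT, hQT⟩ := h _ ((hQ₁.insert a).prod (hQ₂.insert b))
  rcases prod_not_isBounded_fst_or_snd hT with hT₁ | hT₂
  · refine hQT₁ _ hT₁ (hQT.fst_of_prodAction.subset ?_)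
    exact (subset_insert a Q₁).trans (fst_image_prod _ (insert_nonempty b Q₂)).ge
  · refine hQT₂ _ hT₂ (hQT.snd_of_prodAction.subset ?_)
    exact (subset_insert b Q₂).trans (snd_image_prod (insert_nonempty a Q₁) _).ge

end prodAction

theorem prod_evanescence_general
    {G₁ G₂ : Type*} [Group G₁] [Group G₂]
    [TopologicalSpace G₁] [TopologicalSpace G₂]
    {X₁ X₂ : Type*} [MetricSpace X₁] [MetricSpace X₂]
    (hub₁ : ¬ Bornology.IsBounded (Set.univ : Set X₁))
    (hub₂ : ¬ Bornology.IsBounded (Set.univ : Set X₂))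
    (ρ₁ : G₁ → X₁ → X₁) (ρ₂ : G₂ → X₂ → X₂)
    (hact₁ : IsIsometricAction ρ₁) (hact₂ : IsIsometricAction ρ₂)
    (hcont₁ : Continuous fun p : G₁ × X₁ => ρ₁ p.1 p.2)
    (hcont₂ : Continuous fun p : G₂ × X₂ => ρ₂ p.1 p.2) :
    (Evanescent (fun (g : G₁) (x : WithLp 2 (X₁ × X₂)) => prodAction ρ₁ ρ₂ (g, 1) x) ∧
      Evanescent (fun (g : G₂) (x : WithLp 2 (X₁ × X₂)) => prodAction ρ₁ ρ₂ (1, g) x)) ∧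
    (Evanescent (prodAction ρ₁ ρ₂) ↔ (Evanescent ρ₁ ∨ Evanescent ρ₂)) ∧
    (WeaklyEvanescent (prodAction ρ₁ ρ₂) ↔ (WeaklyEvanescent ρ₁ ∨ WeaklyEvanescent ρ₂)) := by
  obtain ⟨o₁, -⟩ := nonempty_of_not_isBounded hub₁
  obtain ⟨o₂, -⟩ := nonempty_of_not_isBounded hub₂
  have horb₁ : Continuous fun g ↦ ρ₁ g o₁ := hcont₁.comp (Continuous.prodMk_left o₁)
  have horb₂ : Continuous fun g ↦ ρ₂ g o₂ := hcont₂.comp (Continuous.prodMk_left o₂)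
  refine ⟨⟨evanescent_prodAction_left horb₁ hact₂.1 hub₂,
      evanescent_prodAction_right horb₂ hact₁.1 hub₁⟩,
    ⟨Evanescent.of_prodAction, fun h ↦ ?_⟩, ⟨WeaklyEvanescent.of_prodAction, fun h ↦ ?_⟩⟩
  · exact h.elim (.prodAction_of_left horb₂) (.prodAction_of_right horb₁)
  · exact h.elim (.prodAction_of_left horb₂) (.prodAction_of_right horb₁)

/-- Monod, Proposition: for continuous isometric actions of `Gᵢ` on unbounded CAT(0) spaces
`Xᵢ` and the product action of `G = G₁ × G₂` on the `ℓ²`-product `X = X₁ ×₂ X₂`: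
(i) each `Gᵢ`-action on `X` (acting on the `i`-th factor and trivially on the other)
is evanescent; (ii) the `G`-action on `X` is evanescent (resp. weakly evanescent) iff at
least one of the `Gᵢ`-actions on `Xᵢ` is so. -/
theorem prod_evanescence
    {G₁ G₂ : Type*} [Group G₁] [Group G₂]
    [TopologicalSpace G₁] [TopologicalSpace G₂]
    [IsTopologicalGroup G₁] [IsTopologicalGroup G₂]
    {X₁ X₂ : Type*} [MetricSpace X₁] [MetricSpace X₂]
    (hX₁ : IsCAT0 X₁) (hX₂ : IsCAT0 X₂)
    (hub₁ : ¬ Bornology.IsBounded (Set.univ : Set X₁))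
    (hub₂ : ¬ Bornology.IsBounded (Set.univ : Set X₂))
    (ρ₁ : G₁ → X₁ → X₁) (ρ₂ : G₂ → X₂ → X₂)
    (hact₁ : IsIsometricAction ρ₁) (hact₂ : IsIsometricAction ρ₂)
    (hcont₁ : Continuous fun p : G₁ × X₁ => ρ₁ p.1 p.2)
    (hcont₂ : Continuous fun p : G₂ × X₂ => ρ₂ p.1 p.2) :
    (Evanescent (fun (g : G₁) (x : WithLp 2 (X₁ × X₂)) => prodAction ρ₁ ρ₂ (g, 1) x) ∧
      Evanescent (fun (g : G₂) (x : WithLp 2 (X₁ × X₂)) => prodAction ρ₁ ρ₂ (1, g) x)) ∧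
    (Evanescent (prodAction ρ₁ ρ₂) ↔ (Evanescent ρ₁ ∨ Evanescent ρ₂)) ∧
    (WeaklyEvanescent (prodAction ρ₁ ρ₂) ↔ (WeaklyEvanescent ρ₁ ∨ WeaklyEvanescent ρ₂)) :=
  prod_evanescence_general hub₁ hub₂ ρ₁ ρ₂ hact₁ hact₂ hcont₁ hcont₂
end

section
/- Let G be a topological group acting continuously by affine isometries on a real Hilbert space X, i.e. g·x = π(g)x + b(g) where π is an orthogonal representation of G on X and b : G → X is the associated cocycle. Then the action is weakly evanescent if and only if π almost has nonzero invariant vectors, i.e. for every compact subset Q ⊆ G and every ε > 0 there is a unit vector v ∈ X with sup_{g ∈ Q} ‖π(g)v − v‖ ≤ ε. -/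
open Bornology

section QEvanescent

variable {G X : Type*} [MetricSpace X]

theorem QEvanescent.of_dist_le {ρ ρ' : G → X → X} {Q : Set G} {T : Set X} {B : ℝ}
    (h : QEvanescent ρ' Q T) (hB : ∀ g ∈ Q, ∀ x ∈ T, dist (ρ g x) (ρ' g x) ≤ B) :
    QEvanescent ρ Q T := by
  obtain ⟨C, hC⟩ := h
  refine ⟨B + C, fun g hg x hx => ?_⟩
  calc dist (ρ g x) x ≤ dist (ρ g x) (ρ' g x) + dist (ρ' g x) x := dist_triangle _ _ _
    _ ≤ B + C := add_le_add (hB g hg x hx) (hC g hg x hx)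

theorem qEvanescent_congr_of_dist_le {ρ ρ' : G → X → X} {Q : Set G} {B : ℝ}
    (hB : ∀ g ∈ Q, ∀ x, dist (ρ g x) (ρ' g x) ≤ B) (T : Set X) :
    QEvanescent ρ Q T ↔ QEvanescent ρ' Q T :=
  ⟨fun h => h.of_dist_le fun g hg x _ => dist_comm (ρ g x) (ρ' g x) ▸ hB g hg x,
    fun h => h.of_dist_le fun g hg x _ => hB g hg x⟩

end QEvanescent

section Linear

variable {G X F : Type*} [NormedAddCommGroup X] [NormedSpace ℝ X]
  [FunLike F X X] [LinearMapClass F ℝ X X]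

theorem norm_map_smul_sub_smul (f : F) (c : ℝ) (x : X) :
    ‖f (c • x) - c • x‖ = |c| * ‖f x - x‖ := by
  rw [map_smul, ← smul_sub, norm_smul, Real.norm_eq_abs]

theorem exists_unbounded_qEvanescent_iff_almost_invariant (π : G → F) (Q : Set G) :
    (∃ T : Set X, ¬IsBounded T ∧ QEvanescent (fun g x => π g x) Q T) ↔
      ∀ ε : ℝ, 0 < ε → ∃ v : X, ‖v‖ = 1 ∧ ∀ g ∈ Q, ‖π g v - v‖ ≤ ε := by
  constructor
  · rintro ⟨T, hT, C, hC⟩ ε hε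
    simp only [isBounded_iff_forall_norm_le, not_exists, not_forall, not_le] at hT
    obtain ⟨x, hxT, hx⟩ := hT (max (C / ε) 0)
    have hx_pos : 0 < ‖x‖ := (le_max_right _ _).trans_lt hx
    have hC_lt : C < ε * ‖x‖ := (div_lt_iff₀' hε).1 ((le_max_left _ _).trans_lt hx)
    refine ⟨‖x‖⁻¹ • x, norm_smul_inv_norm (norm_pos_iff.1 hx_pos), fun g hg => ?_⟩
    rw [norm_map_smul_sub_smul, abs_inv, abs_norm, inv_mul_le_iff₀ hx_pos]
    have := hC g hg x hxT
    rw [dist_eq_norm] at this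
    linarith
  · intro hAI
    choose v hv_norm hv using fun n : ℕ => hAI (1 / (n + 1)) Nat.one_div_pos_of_nat
    refine ⟨Set.range fun n : ℕ => ((n : ℝ) + 1) • v n, ?_, 1, ?_⟩
    · simp only [isBounded_iff_forall_norm_le, not_exists, not_forall, not_le]
      intro C
      obtain ⟨n, hn⟩ := exists_nat_gt C
      refine ⟨_, ⟨n, rfl⟩, ?_⟩
      rw [norm_smul, hv_norm, mul_one, Real.norm_eq_abs, abs_of_pos n.cast_add_one_pos]
      linarith
    · rintro g hg _ ⟨n, rfl⟩
      rw [dist_eq_norm, norm_map_smul_sub_smul, abs_of_pos n.cast_add_one_pos]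
      calc ((n : ℝ) + 1) * ‖π g (v n) - v n‖ ≤ ((n : ℝ) + 1) * (1 / (n + 1)) :=
            mul_le_mul_of_nonneg_left (hv n g hg) n.cast_add_one_pos.le
        _ = 1 := by field_simp

end Linear

theorem weaklyEvanescent_iff_almost_invariant_vectors_general
    {G : Type*} [Group G] [TopologicalSpace G]
    {X : Type*} [NormedAddCommGroup X] [InnerProductSpace ℝ X]
    (π : G →* (X ≃ₗᵢ[ℝ] X)) (b : G → X)
    (hcont : Continuous fun p : G × X => π p.1 p.2 + b p.1) :
    WeaklyEvanescent (fun (g : G) (x : X) => π g x + b g) ↔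
      ∀ Q : Set G, IsCompact Q → ∀ ε : ℝ, 0 < ε →
        ∃ v : X, ‖v‖ = 1 ∧ ∀ g ∈ Q, ‖π g v - v‖ ≤ ε := by
  have hb : Continuous b := by
    simpa only [Function.comp_def, map_zero, zero_add] using
      hcont.comp (Continuous.prodMk_left (0 : X))
  refine forall₂_congr fun Q hQ => ?_
  obtain ⟨B, hB⟩ := isBounded_iff_forall_norm_le.1 (hQ.image hb).isBounded
  have hdist : ∀ g ∈ Q, ∀ x, dist (π g x + b g) (π g x) ≤ B := fun g hg x => by
    rw [dist_self_add_left]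
    exact hB _ ⟨g, hg, rfl⟩
  rw [← exists_unbounded_qEvanescent_iff_almost_invariant (fun g => π g) Q]
  exact exists_congr fun T => and_congr_right' (qEvanescent_congr_of_dist_le hdist T)

/-- Monod, Proposition: a continuous affine isometric action `g · x = π(g)x + b(g)` of a
topological group `G` on a real Hilbert space `X` is weakly evanescent if and only if the
orthogonal representation `π` almost has nonzero invariant vectors. -/
theorem weaklyEvanescent_iff_almost_invariant_vectors
    {G : Type*} [Group G] [TopologicalSpace G] [IsTopologicalGroup G]
    {X : Type*} [NormedAddCommGroup X] [InnerProductSpace ℝ X] [CompleteSpace X]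
    (π : G →* (X ≃ₗᵢ[ℝ] X)) (b : G → X)
    (hπcont : ∀ v : X, Continuous fun g : G => π g v)
    (hcocycle : ∀ g h : G, b (g * h) = π g (b h) + b g)
    (hcont : Continuous fun p : G × X => π p.1 p.2 + b p.1) :
    WeaklyEvanescent (fun (g : G) (x : X) => π g x + b g) ↔
      ∀ Q : Set G, IsCompact Q → ∀ ε : ℝ, 0 < ε →
        ∃ v : X, ‖v‖ = 1 ∧ ∀ g ∈ Q, ‖π g v - v‖ ≤ ε :=
  weaklyEvanescent_iff_almost_invariant_vectors_general π b hcont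
end

section
/- Let a group H act by isometries on a complete CAT(0) space X, and let C₁, C₂, C₃ be minimal nonempty closed convex H-invariant subsets of X (no nonempty closed convex H-invariant subset is properly contained in any Cᵢ). Denote by p_{Cᵢ} : X → Cᵢ the nearest-point projection onto Cᵢ. Then the restriction of p_{C₁} ∘ p_{C₃} ∘ p_{C₂} to C₁ is the identity map of C₁. -/
section Aux

variable {X : Type*} [MetricSpace X]

/-- The CN inequality. -/
def CNineq (X : Type*) [MetricSpace X] : Prop :=
  ∀ x c c' m : X, dist m c = dist c c' / 2 → dist m c' = dist c c' / 2 →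
      2 * dist m x ^ 2 ≤ dist c' x ^ 2 + dist c x ^ 2 - dist c' c ^ 2 / 2

lemma le_of_sq_le {a b : ℝ} (h : a ^ 2 ≤ b ^ 2) (hb : 0 ≤ b) : a ≤ b :=
  le_of_pow_le_pow_left₀ (by norm_num) hb h

lemma exists_mid_mem (hg : IsGeodesicSpace X) {A : Set X} (hA : GConvex A) {x y : X}
    (hx : x ∈ A) (hy : y ∈ A) :
    ∃ m : X, m ∈ A ∧ dist x m = dist x y / 2 ∧ dist m y = dist x y / 2 := by
  obtain ⟨σ, hσ, h0, h1⟩ := hg x y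
  have hd : (0:ℝ) ≤ dist x y := dist_nonneg
  have hm0 : (0:ℝ) ∈ Set.Icc 0 (dist x y) := ⟨le_refl _, hd⟩
  have hmh : dist x y / 2 ∈ Set.Icc 0 (dist x y) := ⟨by linarith, by linarith⟩
  have hmd : dist x y ∈ Set.Icc 0 (dist x y) := ⟨hd, le_refl _⟩
  refine ⟨σ (dist x y / 2), ?_, ?_, ?_⟩
  · exact hA σ 0 (dist x y) hd hσ (by rwa [h0]) (by rwa [h1]) _ hmh
  · have e := hσ 0 hm0 _ hmh
    rw [h0] at e
    rw [e, zero_sub, abs_neg, abs_of_nonneg (by linarith)]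
  · have e := hσ _ hmh _ hmd
    rw [h1] at e
    rw [e, show dist x y / 2 - dist x y = -(dist x y / 2) by ring, abs_neg,
      abs_of_nonneg (by linarith)]

lemma exists_mid (hg : IsGeodesicSpace X) (x y : X) :
    ∃ m : X, dist x m = dist x y / 2 ∧ dist m y = dist x y / 2 := by
  obtain ⟨m, _, h1, h2⟩ := exists_mid_mem hg (A := Set.univ)
    (fun _ _ _ _ _ _ _ _ _ => trivial) (Set.mem_univ x) (Set.mem_univ y)
  exact ⟨m, h1, h2⟩

/-- Half-distance lemma: midpoints from a common vertex. -/
lemma half_dist (hcn : CNineq X) {x u v p q : X}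
    (hp1 : dist x p = dist x u / 2) (hp2 : dist p u = dist x u / 2)
    (hq1 : dist x q = dist x v / 2) (hq2 : dist q v = dist x v / 2) :
    dist p q ≤ dist u v / 2 := by
  have h1 := hcn u x v q (by rwa [dist_comm q x]) hq2
  have h2 := hcn q x u p (by rwa [dist_comm p x]) hp2
  have e1 : dist v x = dist x v := dist_comm _ _
  have e2 : dist u x = dist x u := dist_comm _ _
  have e3 : dist u q = dist q u := dist_comm _ _
  have hle : dist p q ^ 2 ≤ (dist u v / 2) ^ 2 := by
    simp only [dist_comm v x, dist_comm u x, dist_comm u q, dist_comm v u] at h1 h2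
    rw [hq1] at h2
    nlinarith [h1, h2]
  exact le_of_sq_le hle (by positivity)

/-- distance between midpoints of two pairs. -/
lemma dist_mid_le (hg : IsGeodesicSpace X) (hcn : CNineq X) {x x' u v m n : X}
    (hm1 : dist x m = dist x x' / 2) (hm2 : dist m x' = dist x x' / 2)
    (hn1 : dist u n = dist u v / 2) (hn2 : dist n v = dist u v / 2) :
    dist m n ≤ (dist x u + dist x' v) / 2 := by
  obtain ⟨r, hr1, hr2⟩ := exists_mid hg x v
  have hA : dist m r ≤ dist x' v / 2 := half_dist hcn hm1 hm2 hr1 hr2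
  have hB : dist r n ≤ dist x u / 2 := by
    have := half_dist hcn (x := v) (u := x) (v := u) (p := r) (q := n)
      (by rw [dist_comm v r, dist_comm v x]; exact hr2)
      (by rw [dist_comm r x, dist_comm v x]; exact hr1)
      (by rw [dist_comm v n, dist_comm v u]; exact hn2)
      (by rw [dist_comm n u, dist_comm v u]; exact hn1)
    exact this
  calc dist m n ≤ dist m r + dist r n := dist_triangle _ _ _
    _ ≤ (dist x u + dist x' v) / 2 := by linarith

/-- quadrilateral inequality: sum of squared diagonals ≤ sum of squared sides. -/
lemma quad_ineq (hg : IsGeodesicSpace X) (hcn : CNineq X) (a b c d : X) :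
    dist a c ^ 2 + dist b d ^ 2 ≤
      dist a b ^ 2 + dist b c ^ 2 + dist c d ^ 2 + dist d a ^ 2 := by
  obtain ⟨m, hm1, hm2⟩ := exists_mid hg a c
  obtain ⟨n, hn1, hn2⟩ := exists_mid hg b d
  have h1 := hcn b a c m (by rwa [dist_comm m a]) hm2
  have h2 := hcn d a c m (by rwa [dist_comm m a]) hm2
  have h3 := hcn m b d n (by rwa [dist_comm n b]) hn2
  simp only [dist_comm c a, dist_comm c b, dist_comm a d, dist_comm d b, dist_comm d m,
    dist_comm b m] at h1 h2 h3
  nlinarith [h1, h2, h3, sq_nonneg (dist n m)]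

end Aux
section Aux2

variable {X : Type*} [MetricSpace X]

/-- Pythagorean inequality for a point with a nearest-point foot on a geodesic. -/
lemma P_ineq (hcn : CNineq X) {σ : ℝ → X} {L : ℝ} (hL : 0 ≤ L)
    (hσ : IsGeodesicOn σ 0 L) {y : X}
    (hmin : ∀ t ∈ Set.Icc (0:ℝ) L, dist y (σ 0) ≤ dist y (σ t)) :
    dist y (σ 0) ^ 2 + dist (σ 0) (σ L) ^ 2 ≤ dist y (σ L) ^ 2 := by
  have h0L : (0:ℝ) ∈ Set.Icc (0:ℝ) L := ⟨le_refl _, hL⟩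
  have hLL : L ∈ Set.Icc (0:ℝ) L := ⟨hL, le_refl _⟩
  have hdL : dist (σ 0) (σ L) = L := by
    rw [hσ 0 h0L L hLL, zero_sub, abs_neg, abs_of_nonneg hL]
  set g : ℝ → ℝ := fun t => dist y (σ t) ^ 2 with hgdef
  have hmem : ∀ n : ℕ, L * (1/2)^n ∈ Set.Icc (0:ℝ) L := by
    intro n
    constructor
    · positivity
    · calc L * (1/2)^n ≤ L * 1 := by
            apply mul_le_mul_of_nonneg_left _ hL
            exact pow_le_one₀ (by norm_num) (by norm_num)
        _ = L := mul_one L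
  have key : ∀ n : ℕ, g (L * (1/2)^n) - (L * (1/2)^n)^2 ≤
      (1 - (1/2)^n) * g 0 + (1/2)^n * (g L - L^2) := by
    intro n
    induction n with
    | zero => simp
    | succ n ih =>
      set tn := L * (1/2)^n with htn
      have htn0 : 0 ≤ tn := by positivity
      have htnI : tn ∈ Set.Icc (0:ℝ) L := hmem n
      have htnI2 : tn/2 ∈ Set.Icc (0:ℝ) L := by
        constructor
        · linarith
        · linarith [htnI.2]
      have hd1 : dist (σ (tn/2)) (σ 0) = tn / 2 := by
        rw [hσ _ htnI2 0 h0L]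
        rw [show tn/2 - 0 = tn/2 by ring, abs_of_nonneg (by linarith)]
      have hd2 : dist (σ (tn/2)) (σ tn) = tn / 2 := by
        rw [hσ _ htnI2 _ htnI]
        rw [show tn/2 - tn = -(tn/2) by ring, abs_neg, abs_of_nonneg (by linarith)]
      have hd3 : dist (σ 0) (σ tn) = tn := by
        rw [hσ 0 h0L _ htnI, zero_sub, abs_neg, abs_of_nonneg htn0]
      have hcn' := hcn y (σ 0) (σ tn) (σ (tn/2))
        (by rw [hd1, hd3]) (by rw [hd2, hd3])
      have hcomm : dist (σ tn) (σ 0) = tn := by rw [dist_comm, hd3]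
      rw [hcomm] at hcn'
      have step : g (tn/2) - (tn/2)^2 ≤ (1/2) * (g 0) + (1/2) * (g tn - tn^2) := by
        have : 2 * g (tn/2) ≤ g tn + g 0 - tn^2/2 := by
          simpa [hgdef, dist_comm y (σ (tn/2)), dist_comm y (σ tn), dist_comm y (σ 0)]
            using hcn'
        nlinarith [this]
      have htn2 : tn / 2 = L * (1/2)^(n+1) := by
        rw [htn]; ring
      rw [← htn2]
      calc g (tn/2) - (tn/2)^2 ≤ (1/2) * (g 0) + (1/2) * (g tn - tn^2) := step
        _ ≤ (1/2) * (g 0) + (1/2) * ((1 - (1/2)^n) * g 0 + (1/2)^n * (g L - L^2)) := by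
            linarith [ih]
        _ = (1 - (1/2)^(n+1)) * g 0 + (1/2)^(n+1) * (g L - L^2) := by ring
  have key2 : ∀ n : ℕ, g 0 ≤ g L - L^2 + L^2 * (1/2)^n := by
    intro n
    have h1 : g 0 ≤ g (L * (1/2)^n) := by
      have := hmin _ (hmem n)
      have h0 : 0 ≤ dist y (σ 0) := dist_nonneg
      simp only [hgdef]
      nlinarith [this, h0]
    have h2 := key n
    have hpos : (0:ℝ) < (1/2)^n := by positivity
    have h3 : (1/2:ℝ)^n * g 0 ≤ (1/2)^n * (g L - L^2) + (L * (1/2)^n)^2 := by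
      nlinarith [h1, h2]
    have h4 : (L * (1/2)^n)^2 = (1/2)^n * (L^2 * (1/2)^n) := by ring
    rw [h4] at h3
    have h5 : (1/2:ℝ)^n * g 0 ≤ (1/2)^n * ((g L - L^2) + L^2 * (1/2)^n) := by linarith
    exact le_of_mul_le_mul_left (by linarith [h5]) hpos
  have hfinal : g 0 ≤ g L - L^2 := by
    apply le_of_forall_pos_le_add
    intro ε hε
    rcases eq_or_lt_of_le (sq_nonneg L) with hL0 | hLpos
    · have := key2 0
      simp at this
      calc g 0 ≤ g L - L^2 + L^2 * 1 := by simpa using key2 0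
        _ = g L - L^2 + L^2 := by ring
        _ = g L - L^2 + 0 := by rw [← hL0]
        _ ≤ g L - L^2 + ε := by linarith
    · obtain ⟨n, hn⟩ := exists_pow_lt_of_lt_one (div_pos hε hLpos) (by norm_num : (1/2:ℝ) < 1)
      have : L^2 * (1/2)^n < ε := by
        rw [lt_div_iff₀ hLpos] at hn
        linarith [hn]
      linarith [key2 n]
  rw [hdL]
  simp only [hgdef] at hfinal
  linarith [hfinal]

end Aux2
section Aux3

variable {X : Type*} [MetricSpace X]

/-- bisection: a Lipschitz, midpoint-quasiconvex function on an interval is bounded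
by the max of its endpoint values. -/
lemma bisect_max {f : ℝ → ℝ} {a b C : ℝ} (hab : a ≤ b) (hC : 0 ≤ C)
    (hlip : ∀ s ∈ Set.Icc a b, ∀ t ∈ Set.Icc a b, |f s - f t| ≤ C * |s - t|)
    (hmid : ∀ s ∈ Set.Icc a b, ∀ t ∈ Set.Icc a b, f ((s + t) / 2) ≤ max (f s) (f t)) :
    ∀ t ∈ Set.Icc a b, f t ≤ max (f a) (f b) := by
  intro t ht
  set M := max (f a) (f b) with hM
  set P : ℕ → ℝ × ℝ := fun n => Nat.rec (a, b)
    (fun _ p => if t ≤ (p.1 + p.2)/2 then (p.1, (p.1 + p.2)/2) else ((p.1 + p.2)/2, p.2)) n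
    with hP
  have hPs : ∀ n : ℕ, P (n+1) =
      if t ≤ ((P n).1 + (P n).2)/2 then ((P n).1, ((P n).1 + (P n).2)/2)
      else (((P n).1 + (P n).2)/2, (P n).2) := fun n => rfl
  have inv : ∀ n : ℕ, (P n).1 ∈ Set.Icc a b ∧ (P n).2 ∈ Set.Icc a b ∧
      (P n).1 ≤ t ∧ t ≤ (P n).2 ∧ f (P n).1 ≤ M ∧ f (P n).2 ≤ M ∧
      (P n).2 - (P n).1 = (b - a) * (1/2)^n := by
    intro n
    induction n with
    | zero =>
      have hP0 : P 0 = (a, b) := rfl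
      rw [hP0]
      refine ⟨⟨le_refl _, hab⟩, ⟨hab, le_refl _⟩, ht.1, ht.2, le_max_left _ _,
        le_max_right _ _, by simp⟩
    | succ n ih =>
      obtain ⟨h1, h2, h3, h4, h5, h6, h7⟩ := ih
      have hmI : ((P n).1 + (P n).2)/2 ∈ Set.Icc a b := by
        constructor
        · linarith [h1.1, h2.1]
        · linarith [h1.2, h2.2]
      have hfm : f (((P n).1 + (P n).2)/2) ≤ M := by
        calc f (((P n).1 + (P n).2)/2) ≤ max (f (P n).1) (f (P n).2) := hmid _ h1 _ h2
          _ ≤ M := max_le h5 h6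
      have hord : (P n).1 ≤ (P n).2 := le_trans h3 h4
      rw [hPs n]
      by_cases hc : t ≤ ((P n).1 + (P n).2)/2
      · simp only [if_pos hc]
        refine ⟨h1, hmI, h3, hc, h5, hfm, ?_⟩
        have : ((P n).1 + (P n).2)/2 - (P n).1 = ((P n).2 - (P n).1)/2 := by ring
        rw [this, h7]; ring
      · simp only [if_neg hc]
        push_neg at hc
        refine ⟨hmI, h2, le_of_lt hc, h4, hfm, h6, ?_⟩
        have : (P n).2 - ((P n).1 + (P n).2)/2 = ((P n).2 - (P n).1)/2 := by ring
        rw [this, h7]; ring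
  have hbd : ∀ n : ℕ, f t ≤ M + C * ((b - a) * (1/2)^n) := by
    intro n
    obtain ⟨h1, h2, h3, h4, h5, h6, h7⟩ := inv n
    have hlt : |f t - f (P n).1| ≤ C * |t - (P n).1| := hlip t ht _ h1
    have habs : |t - (P n).1| ≤ (b - a) * (1/2)^n := by
      rw [abs_of_nonneg (by linarith)]
      linarith
    have : f t - f (P n).1 ≤ |f t - f (P n).1| := le_abs_self _
    have hC2 : C * |t - (P n).1| ≤ C * ((b - a) * (1/2)^n) :=
      mul_le_mul_of_nonneg_left habs hC
    linarith
  apply le_of_forall_pos_le_add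
  intro ε hε
  rcases eq_or_lt_of_le (mul_nonneg hC (by linarith : (0:ℝ) ≤ b - a)) with h0 | hpos
  · have := hbd 0
    simp only [pow_zero, mul_one] at this
    have : f t ≤ M + C * (b-a) := by linarith [this]
    linarith [h0]
  · obtain ⟨n, hn⟩ := exists_pow_lt_of_lt_one (div_pos hε hpos) (by norm_num : (1/2:ℝ) < 1)
    rw [lt_div_iff₀ hpos] at hn
    have := hbd n
    have : C * ((b - a) * (1/2)^n) < ε := by nlinarith [hn]
    linarith [hbd n]

/-- A Lipschitz invariant quasiconvex function on a minimal set is constant. -/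
lemma const_of_minimal {G : Type*} [Group G] {ρ : G → X → X}
    {A : Set X}
    (hAcl : IsClosed A) (hAcv : GConvex A)
    (hAinv : ∀ h : G, ∀ u ∈ A, ρ h u ∈ A)
    (hAmin : ∀ C' : Set X, C'.Nonempty → IsClosed C' → GConvex C' →
      (∀ h : G, ∀ u ∈ C', ρ h u ∈ C') → C' ⊆ A → C' = A)
    (f : X → ℝ) {C : ℝ} (hC : 0 ≤ C)
    (hLip : ∀ u v : X, |f u - f v| ≤ C * dist u v)
    (hconv : ∀ u ∈ A, ∀ v ∈ A, ∀ m ∈ A, dist u m = dist u v / 2 → dist m v = dist u v / 2 →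
      f m ≤ max (f u) (f v))
    (hfinv : ∀ h : G, ∀ u : X, f (ρ h u) = f u) :
    ∀ u ∈ A, ∀ v ∈ A, f u = f v := by
  have hcont : Continuous f := by
    have : LipschitzWith (⟨C, hC⟩ : NNReal) f := by
      apply LipschitzWith.of_dist_le_mul
      intro u v
      have := hLip u v
      rw [Real.dist_eq]
      exact le_trans this le_rfl
    exact this.continuous
  suffices Hle : ∀ u ∈ A, ∀ v ∈ A, f u ≤ f v by
    exact fun u hu v hv => le_antisymm (Hle u hu v hv) (Hle v hv u hu)
  intro u hu v hv
  set S : Set X := {w | w ∈ A ∧ f w ≤ f v} with hS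
  have hSsub : S ⊆ A := fun w hw => hw.1
  have hSne : S.Nonempty := ⟨v, hv, le_refl _⟩
  have hScl : IsClosed S := by
    have : S = A ∩ f ⁻¹' (Set.Iic (f v)) := rfl
    rw [this]
    exact hAcl.inter (IsClosed.preimage hcont isClosed_Iic)
  have hScv : GConvex S := by
    intro σ a b hab hσ ha hb s hs
    have hmemA : ∀ r ∈ Set.Icc a b, σ r ∈ A := fun r hr =>
      hAcv σ a b hab hσ ha.1 hb.1 r hr
    refine ⟨hmemA s hs, ?_⟩
    have hbm := bisect_max (f := f ∘ σ) hab hC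
      (fun r hr r' hr' => by
        have := hLip (σ r) (σ r')
        rw [hσ r hr r' hr'] at this
        exact this)
      (fun r hr r' hr' => by
        have hmidI : (r + r')/2 ∈ Set.Icc a b := by
          constructor
          · have := hr.1; have := hr'.1; simp only [Set.mem_Icc] at *; linarith [hr.1, hr'.1]
          · simp only [Set.mem_Icc] at *; linarith [hr.2, hr'.2]
        have hde : dist (σ r) (σ r') = |r - r'| := hσ r hr r' hr'
        have hd1 : dist (σ r) (σ ((r+r')/2)) = dist (σ r) (σ r') / 2 := by
          rw [hσ r hr _ hmidI, hde]
          rw [show r - (r+r')/2 = (r - r')/2 by ring, abs_div]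
          norm_num
        have hd2 : dist (σ ((r+r')/2)) (σ r') = dist (σ r) (σ r') / 2 := by
          rw [hσ _ hmidI r' hr', hde]
          rw [show (r+r')/2 - r' = (r - r')/2 by ring, abs_div]
          norm_num
        exact hconv (σ r) (hmemA r hr) (σ r') (hmemA r' hr') (σ ((r+r')/2))
          (hmemA _ hmidI) hd1 hd2)
      s hs
    calc f (σ s) ≤ max (f (σ a)) (f (σ b)) := hbm
      _ ≤ f v := max_le ha.2 hb.2
  have hSinv : ∀ h : G, ∀ w ∈ S, ρ h w ∈ S := by
    intro h w hw
    exact ⟨hAinv h w hw.1, by rw [hfinv h w]; exact hw.2⟩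
  have hSA : S = A := hAmin S hSne hScl hScv hSinv hSsub
  have : u ∈ S := by rw [hSA]; exact hu
  exact this.2

end Aux3
section Aux4

variable {X : Type*} [MetricSpace X]

/-- uniqueness of nearest points in a geodesically convex set. -/
lemma nearest_unique (hg : IsGeodesicSpace X) (hcn : CNineq X) {B : Set X} (hBcv : GConvex B)
    {y b b' : X} (hb : b ∈ B) (hb' : b' ∈ B)
    (hmin : ∀ c ∈ B, dist y b ≤ dist y c) (hmin' : ∀ c ∈ B, dist y b' ≤ dist y c) :
    b = b' := by
  obtain ⟨m, hmB, hm1, hm2⟩ := exists_mid_mem hg hBcv hb hb'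
  have he : dist y b = dist y b' := le_antisymm (hmin b' hb') (hmin' b hb)
  have h1 : dist y b ≤ dist y m := hmin m hmB
  have hcn' := hcn y b b' m (by rwa [dist_comm m b]) hm2
  have hz : dist b b' ^ 2 ≤ 0 := by
    simp only [dist_comm m y, dist_comm b' y, dist_comm b y, dist_comm b' b] at hcn'
    have h5 : dist y b ^ 2 ≤ dist y m ^ 2 := by
      nlinarith [h1, dist_nonneg (x := y) (y := b)]
    have he2 : dist y b ^ 2 = dist y b' ^ 2 := by rw [he]
    linarith [hcn', h5, he2]
  have hz0 : dist b b' = 0 :=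
    (pow_eq_zero_iff two_ne_zero).mp (le_antisymm hz (sq_nonneg _))
  exact eq_of_dist_eq_zero hz0

/-- nearest-point projections are equivariant. -/
lemma proj_equivariant (hg : IsGeodesicSpace X) (hcn : CNineq X)
    {G : Type*} [Group G] {ρ : G → X → X}
    (hone : ∀ x, ρ 1 x = x) (hmul : ∀ g h x, ρ (g * h) x = ρ g (ρ h x))
    (hiso : ∀ g : G, Isometry (ρ g))
    {B : Set X} (hBcv : GConvex B) (hBinv : ∀ h : G, ∀ u ∈ B, ρ h u ∈ B)
    {pB : X → X} (hpB : ∀ u : X, pB u ∈ B ∧ ∀ v ∈ B, dist u (pB u) ≤ dist u v) :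
    ∀ (g : G) (x : X), pB (ρ g x) = ρ g (pB x) := by
  intro g x
  apply nearest_unique hg hcn hBcv (hpB (ρ g x)).1 (hBinv g _ (hpB x).1)
    (hpB (ρ g x)).2
  intro c hc
  have hc' : ρ g⁻¹ c ∈ B := hBinv g⁻¹ c hc
  have hgc : ρ g (ρ g⁻¹ c) = c := by
    rw [← hmul, mul_inv_cancel, hone]
  calc dist (ρ g x) (ρ g (pB x)) = dist x (pB x) := (hiso g).dist_eq _ _
    _ ≤ dist x (ρ g⁻¹ c) := (hpB x).2 _ hc'
    _ = dist (ρ g x) (ρ g (ρ g⁻¹ c)) := ((hiso g).dist_eq _ _).symm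
    _ = dist (ρ g x) c := by rw [hgc]

/-- Pythagorean inequality against a convex set. -/
lemma pythagoras (hg : IsGeodesicSpace X) (hcn : CNineq X)
    {B : Set X} (hBcv : GConvex B)
    {pB : X → X} (hpB : ∀ u : X, pB u ∈ B ∧ ∀ v ∈ B, dist u (pB u) ≤ dist u v)
    (y : X) {c : X} (hc : c ∈ B) :
    dist y (pB y) ^ 2 + dist (pB y) c ^ 2 ≤ dist y c ^ 2 := by
  obtain ⟨σ, hσ, h0, h1⟩ := hg (pB y) c
  have hL : (0:ℝ) ≤ dist (pB y) c := dist_nonneg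
  have hmin : ∀ t ∈ Set.Icc (0:ℝ) (dist (pB y) c), dist y (σ 0) ≤ dist y (σ t) := by
    intro t htI
    have : σ t ∈ B := hBcv σ 0 (dist (pB y) c) hL hσ (by rw [h0]; exact (hpB y).1)
      (by rw [h1]; exact hc) t htI
    rw [h0]
    exact (hpB y).2 _ this
  have := P_ineq hcn hL hσ hmin
  rw [h0, h1] at this
  exact this

/-- nearest-point projections onto convex sets are nonexpansive. -/
lemma proj_nonexp (hg : IsGeodesicSpace X) (hcn : CNineq X)
    {B : Set X} (hBcv : GConvex B)
    {pB : X → X} (hpB : ∀ u : X, pB u ∈ B ∧ ∀ v ∈ B, dist u (pB u) ≤ dist u v) :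
    ∀ y z : X, dist (pB y) (pB z) ≤ dist y z := by
  intro y z
  have hQ := quad_ineq hg hcn y (pB y) (pB z) z
  have hP1 := pythagoras hg hcn hBcv hpB y (hpB z).1
  have hP2 := pythagoras hg hcn hBcv hpB z (hpB y).1
  have hle : dist (pB y) (pB z) ^ 2 ≤ dist y z ^ 2 := by
    simp only [dist_comm (pB z) (pB y), dist_comm z y, dist_comm (pB z) z,
      dist_comm (pB y) y, dist_comm (pB y) z, dist_comm (pB z) y] at hQ hP1 hP2 ⊢
    nlinarith [hQ, hP1, hP2]
  exact le_of_sq_le hle dist_nonneg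

/-- the distance to the projection is constant on a minimal invariant set. -/
lemma dist_proj_const (hg : IsGeodesicSpace X) (hcn : CNineq X)
    {G : Type*} [Group G] {ρ : G → X → X}
    (hone : ∀ x, ρ 1 x = x) (hmul : ∀ g h x, ρ (g * h) x = ρ g (ρ h x))
    (hiso : ∀ g : G, Isometry (ρ g))
    {A B : Set X}
    (hAcl : IsClosed A) (hAcv : GConvex A)
    (hAinv : ∀ h : G, ∀ u ∈ A, ρ h u ∈ A)
    (hAmin : ∀ C' : Set X, C'.Nonempty → IsClosed C' → GConvex C' →
      (∀ h : G, ∀ u ∈ C', ρ h u ∈ C') → C' ⊆ A → C' = A)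
    (hBcv : GConvex B) (hBinv : ∀ h : G, ∀ u ∈ B, ρ h u ∈ B)
    {pB : X → X} (hpB : ∀ u : X, pB u ∈ B ∧ ∀ v ∈ B, dist u (pB u) ≤ dist u v) :
    ∀ u ∈ A, ∀ v ∈ A, dist u (pB u) = dist v (pB v) := by
  apply const_of_minimal hAcl hAcv hAinv hAmin (fun u => dist u (pB u))
    (C := 2) (by norm_num)
  · intro u v
    have h1 : dist u (pB u) ≤ dist v (pB v) + 2 * dist u v := by
      calc dist u (pB u) ≤ dist u (pB v) := (hpB u).2 _ (hpB v).1
        _ ≤ dist u v + dist v (pB v) := dist_triangle _ _ _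
        _ ≤ dist v (pB v) + 2 * dist u v := by linarith [dist_nonneg (x := u) (y := v)]
    have h2 : dist v (pB v) ≤ dist u (pB u) + 2 * dist u v := by
      calc dist v (pB v) ≤ dist v (pB u) := (hpB v).2 _ (hpB u).1
        _ ≤ dist v u + dist u (pB u) := dist_triangle _ _ _
        _ ≤ dist u (pB u) + 2 * dist u v := by
            rw [dist_comm v u]; linarith [dist_nonneg (x := u) (y := v)]
    rw [abs_le]
    constructor <;> linarith
  · intro u hu v hv m hm hd1 hd2
    obtain ⟨q, hqB, hq1, hq2⟩ := exists_mid_mem hg hBcv (hpB u).1 (hpB v).1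
    have hmle : dist m (pB m) ≤ dist m q := (hpB m).2 _ hqB
    have hmid := dist_mid_le hg hcn hd1 hd2 hq1 hq2
    have : dist m (pB m) ≤ (dist u (pB u) + dist v (pB v)) / 2 := le_trans hmle hmid
    rcases le_total (dist u (pB u)) (dist v (pB v)) with h | h
    · exact le_trans (by linarith) (le_max_right _ _)
    · exact le_trans (by linarith) (le_max_left _ _)
  · intro h u
    rw [proj_equivariant hg hcn hone hmul hiso hBcv hBinv hpB h u]
    exact (hiso h).dist_eq _ _

/-- the two-set identity: projecting to B and back to A is the identity on A. -/
lemma two_set_id (hg : IsGeodesicSpace X) (hcn : CNineq X)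
    {A B : Set X} (hAcv : GConvex A)
    {pA pB : X → X}
    (hpA : ∀ u : X, pA u ∈ A ∧ ∀ v ∈ A, dist u (pA u) ≤ dist u v)
    (hpB : ∀ u : X, pB u ∈ B ∧ ∀ v ∈ B, dist u (pB u) ≤ dist u v)
    (hcA : ∀ u ∈ A, ∀ v ∈ A, dist u (pB u) = dist v (pB v)) :
    ∀ x ∈ A, pA (pB x) = x := by
  intro x hx
  have hyB : pB x ∈ B := (hpB x).1
  have hwA : pA (pB x) ∈ A := (hpA (pB x)).1
  have h1 : dist (pB x) (pA (pB x)) ≤ dist (pB x) x := (hpA (pB x)).2 x hx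
  have h2 : dist (pA (pB x)) (pB (pA (pB x))) ≤ dist (pA (pB x)) (pB x) :=
    (hpB (pA (pB x))).2 (pB x) hyB
  have h3 : dist x (pB x) = dist (pA (pB x)) (pB (pA (pB x))) := hcA x hx _ hwA
  have heq : dist (pB x) (pA (pB x)) = dist (pB x) x := by
    have ha : dist (pB x) x ≤ dist (pB x) (pA (pB x)) := by
      calc dist (pB x) x = dist x (pB x) := dist_comm _ _
        _ = dist (pA (pB x)) (pB (pA (pB x))) := h3
        _ ≤ dist (pA (pB x)) (pB x) := h2
        _ = dist (pB x) (pA (pB x)) := dist_comm _ _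
    exact le_antisymm h1 ha
  obtain ⟨m, hmA, hm1, hm2⟩ := exists_mid_mem hg hAcv hx hwA
  have h4 : dist (pB x) (pA (pB x)) ≤ dist (pB x) m := (hpA (pB x)).2 m hmA
  have hcn' := hcn (pB x) x (pA (pB x)) m (by rwa [dist_comm m x]) hm2
  have hz2 : dist x (pA (pB x)) ^ 2 ≤ 0 := by
    simp only [dist_comm (pA (pB x)) (pB x), dist_comm x (pB x), dist_comm m (pB x),
      dist_comm (pA (pB x)) x] at hcn'
    have h5 : dist (pB x) (pA (pB x)) ^ 2 ≤ dist (pB x) m ^ 2 := by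
      nlinarith [h4, dist_nonneg (x := pB x) (y := pA (pB x))]
    have he2 : dist (pB x) (pA (pB x)) ^ 2 = dist (pB x) x ^ 2 := by rw [heq]
    linarith [hcn', h5, he2]
  have hz0 : dist x (pA (pB x)) = 0 :=
    (pow_eq_zero_iff two_ne_zero).mp (le_antisymm hz2 (sq_nonneg _))
  exact (eq_of_dist_eq_zero hz0).symm

end Aux4

set_option maxHeartbeats 2000000 in
/-- Monod, Proposition: for three minimal nonempty closed convex `H`-invariant subsets
`C₁, C₂, C₃` of a complete CAT(0) space, the composition of nearest-point projections
`p_{C₁} ∘ p_{C₃} ∘ p_{C₂}` restricts to the identity on `C₁`. -/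
theorem proj_comp_eq_id
    {H : Type*} [Group H]
    {X : Type*} [MetricSpace X] [CompleteSpace X] (hX : IsCAT0 X)
    (ρ : H → X → X) (hact : IsIsometricAction ρ)
    (C₁ C₂ C₃ : Set X)
    (h₁ne : C₁.Nonempty) (h₂ne : C₂.Nonempty) (h₃ne : C₃.Nonempty)
    (h₁cl : IsClosed C₁) (h₂cl : IsClosed C₂) (h₃cl : IsClosed C₃)
    (h₁cv : GConvex C₁) (h₂cv : GConvex C₂) (h₃cv : GConvex C₃)
    (h₁inv : ∀ h : H, ∀ x ∈ C₁, ρ h x ∈ C₁)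
    (h₂inv : ∀ h : H, ∀ x ∈ C₂, ρ h x ∈ C₂)
    (h₃inv : ∀ h : H, ∀ x ∈ C₃, ρ h x ∈ C₃)
    (h₁min : ∀ C' : Set X, C'.Nonempty → IsClosed C' → GConvex C' →
      (∀ h : H, ∀ x ∈ C', ρ h x ∈ C') → C' ⊆ C₁ → C' = C₁)
    (h₂min : ∀ C' : Set X, C'.Nonempty → IsClosed C' → GConvex C' →
      (∀ h : H, ∀ x ∈ C', ρ h x ∈ C') → C' ⊆ C₂ → C' = C₂)
    (h₃min : ∀ C' : Set X, C'.Nonempty → IsClosed C' → GConvex C' →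
      (∀ h : H, ∀ x ∈ C', ρ h x ∈ C') → C' ⊆ C₃ → C' = C₃)
    (p₁ p₂ p₃ : X → X)
    (hp₁ : ∀ x : X, p₁ x ∈ C₁ ∧ ∀ y ∈ C₁, dist x (p₁ x) ≤ dist x y)
    (hp₂ : ∀ x : X, p₂ x ∈ C₂ ∧ ∀ y ∈ C₂, dist x (p₂ x) ≤ dist x y)
    (hp₃ : ∀ x : X, p₃ x ∈ C₃ ∧ ∀ y ∈ C₃, dist x (p₃ x) ≤ dist x y) :
    ∀ x ∈ C₁, p₁ (p₃ (p₂ x)) = x := by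
  obtain ⟨hg, hcn'⟩ := hX
  have hcn : CNineq X := hcn'
  obtain ⟨hone, hmul, hiso⟩ := hact
  have c12 := dist_proj_const hg hcn hone hmul hiso h₁cl h₁cv h₁inv h₁min h₂cv h₂inv hp₂
  have c23 := dist_proj_const hg hcn hone hmul hiso h₂cl h₂cv h₂inv h₂min h₃cv h₃inv hp₃
  have c31 := dist_proj_const hg hcn hone hmul hiso h₃cl h₃cv h₃inv h₃min h₁cv h₁inv hp₁
  have id12 : ∀ u ∈ C₁, p₁ (p₂ u) = u := two_set_id hg hcn h₁cv hp₁ hp₂ c12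
  have id23 : ∀ u ∈ C₂, p₂ (p₃ u) = u := two_set_id hg hcn h₂cv hp₂ hp₃ c23
  have id31 : ∀ u ∈ C₃, p₃ (p₁ u) = u := two_set_id hg hcn h₃cv hp₃ hp₁ c31
  have ne1 := proj_nonexp hg hcn h₁cv hp₁
  have ne2 := proj_nonexp hg hcn h₂cv hp₂
  have ne3 := proj_nonexp hg hcn h₃cv hp₃
  have iso12 : ∀ u ∈ C₁, ∀ v ∈ C₁, dist (p₂ u) (p₂ v) = dist u v := by
    intro u hu v hv
    refine le_antisymm (ne2 u v) ?_
    calc dist u v = dist (p₁ (p₂ u)) (p₁ (p₂ v)) := by rw [id12 u hu, id12 v hv]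
      _ ≤ dist (p₂ u) (p₂ v) := ne1 _ _
  have iso23 : ∀ u ∈ C₂, ∀ v ∈ C₂, dist (p₃ u) (p₃ v) = dist u v := by
    intro u hu v hv
    refine le_antisymm (ne3 u v) ?_
    calc dist u v = dist (p₂ (p₃ u)) (p₂ (p₃ v)) := by rw [id23 u hu, id23 v hv]
      _ ≤ dist (p₃ u) (p₃ v) := ne2 _ _
  have iso31 : ∀ u ∈ C₃, ∀ v ∈ C₃, dist (p₁ u) (p₁ v) = dist u v := by
    intro u hu v hv
    refine le_antisymm (ne1 u v) ?_
    calc dist u v = dist (p₃ (p₁ u)) (p₃ (p₁ v)) := by rw [id31 u hu, id31 v hv]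
      _ ≤ dist (p₁ u) (p₁ v) := ne3 _ _
  obtain ⟨φ, hφdef⟩ : ∃ φ : X → X, ∀ u, φ u = p₁ (p₃ (p₂ u)) :=
    ⟨fun u => p₁ (p₃ (p₂ u)), fun u => rfl⟩
  have φmem : ∀ u : X, φ u ∈ C₁ := by
    intro u; rw [hφdef]; exact (hp₁ _).1
  have φiso : ∀ u ∈ C₁, ∀ v ∈ C₁, dist (φ u) (φ v) = dist u v := by
    intro u hu v hv
    rw [hφdef, hφdef]
    calc dist (p₁ (p₃ (p₂ u))) (p₁ (p₃ (p₂ v))) = dist (p₃ (p₂ u)) (p₃ (p₂ v)) :=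
          iso31 _ (hp₃ _).1 _ (hp₃ _).1
      _ = dist (p₂ u) (p₂ v) := iso23 _ (hp₂ u).1 _ (hp₂ v).1
      _ = dist u v := iso12 u hu v hv
  have φnonexp : ∀ u v : X, dist (φ u) (φ v) ≤ dist u v := by
    intro u v
    rw [hφdef, hφdef]
    calc dist (p₁ (p₃ (p₂ u))) (p₁ (p₃ (p₂ v))) ≤ dist (p₃ (p₂ u)) (p₃ (p₂ v)) := ne1 _ _
      _ ≤ dist (p₂ u) (p₂ v) := ne3 _ _
      _ ≤ dist u v := ne2 _ _
  have φequi : ∀ (g : H) (u : X), φ (ρ g u) = ρ g (φ u) := by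
    intro g u
    rw [hφdef, hφdef]
    rw [proj_equivariant hg hcn hone hmul hiso h₂cv h₂inv hp₂ g u,
        proj_equivariant hg hcn hone hmul hiso h₃cv h₃inv hp₃ g _,
        proj_equivariant hg hcn hone hmul hiso h₁cv h₁inv hp₁ g _]
  have fconst : ∀ u ∈ C₁, ∀ v ∈ C₁, dist u (φ u) = dist v (φ v) := by
    apply const_of_minimal h₁cl h₁cv h₁inv h₁min (fun u => dist u (φ u))
      (C := 2) (by norm_num)
    · intro u v
      have t1 : dist u (φ u) ≤ dist u v + dist v (φ v) + dist (φ v) (φ u) :=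
        dist_triangle4 u v (φ v) (φ u)
      have t2 : dist v (φ v) ≤ dist v u + dist u (φ u) + dist (φ u) (φ v) :=
        dist_triangle4 v u (φ u) (φ v)
      have n1 : dist (φ v) (φ u) ≤ dist u v := by
        rw [dist_comm (φ v) (φ u)]; exact φnonexp u v
      have n2 : dist (φ u) (φ v) ≤ dist u v := φnonexp u v
      have hvu : dist v u = dist u v := dist_comm _ _
      rw [abs_le]
      constructor <;> linarith
    · intro u hu v hv m hm hd1 hd2
      have hn1 : dist (φ u) (φ m) = dist (φ u) (φ v) / 2 := by
        rw [φiso u hu m hm, φiso u hu v hv]; exact hd1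
      have hn2 : dist (φ m) (φ v) = dist (φ u) (φ v) / 2 := by
        rw [φiso m hm v hv, φiso u hu v hv]; exact hd2
      have hle := dist_mid_le hg hcn hd1 hd2 hn1 hn2
      rcases le_total (dist u (φ u)) (dist v (φ v)) with h | h
      · exact le_trans (by linarith) (le_max_right _ _)
      · exact le_trans (by linarith) (le_max_left _ _)
    · intro g u
      show dist (ρ g u) (φ (ρ g u)) = dist u (φ u)
      rw [φequi g u]
      exact (hiso g).dist_eq u (φ u)
  intro x hx
  obtain ⟨δ, hδdef⟩ : ∃ δ : ℝ, δ = dist x (φ x) := ⟨_, rfl⟩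
  have hδ0 : 0 ≤ δ := hδdef ▸ dist_nonneg
  have hdisp : ∀ u ∈ C₁, dist u (φ u) = δ := by
    intro u hu
    rw [hδdef]
    exact fconst u hu x hx
  obtain ⟨w, hw0, hwsucc⟩ : ∃ w : ℕ → X, w 0 = x ∧ ∀ n, w (n+1) = φ (w n) :=
    ⟨fun n => φ^[n] x, rfl, fun n => Function.iterate_succ_apply' φ n x⟩
  have hwmem : ∀ n, w n ∈ C₁ := by
    intro n
    induction n with
    | zero => rw [hw0]; exact hx
    | succ n ih => rw [hwsucc n]; exact φmem _
  have hstep : ∀ n, dist (w n) (w (n+1)) = δ := by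
    intro n
    rw [hwsucc n]
    exact hdisp (w n) (hwmem n)
  have hD2 : ∀ u ∈ C₁, dist u (φ (φ u)) = 2 * δ := by
    intro u hu
    have hφu : φ u ∈ C₁ := φmem u
    have hdu : dist u (φ u) = δ := hdisp u hu
    have hdφu : dist (φ u) (φ (φ u)) = δ := hdisp (φ u) hφu
    obtain ⟨m, hmA, hm1, hm2⟩ := exists_mid_mem hg h₁cv hu hφu
    have hfm : dist m (φ m) = δ := hdisp m hmA
    have hn1 : dist (φ u) (φ m) = dist u (φ u) / 2 := by
      rw [φiso u hu m hmA]; exact hm1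
    have hn2 : dist (φ m) (φ (φ u)) = dist u (φ u) / 2 := by
      rw [φiso m hmA (φ u) hφu]; exact hm2
    have hA := hcn (φ m) u (φ u) m (by rwa [dist_comm m u]) hm2
    have hB := hcn u (φ u) (φ (φ u)) (φ m)
      (by rw [dist_comm (φ m) (φ u), hn1, hdu, hdφu])
      (by rw [hn2, hdu, hdφu])
    have hup : dist u (φ (φ u)) ≤ 2 * δ := by
      calc dist u (φ (φ u)) ≤ dist u (φ u) + dist (φ u) (φ (φ u)) := dist_triangle _ _ _
        _ = 2 * δ := by rw [hdu, hdφu]; ring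
    have hlo : 2 * δ ≤ dist u (φ (φ u)) := by
      have e1 : dist (φ u) (φ m) = δ / 2 := by rw [hn1, hdu]
      have e2 : dist m u = δ / 2 := by rw [dist_comm m u, hm1, hdu]
      have e3 : dist (φ u) u = δ := by rw [dist_comm (φ u) u]; exact hdu
      have e4 : dist (φ (φ u)) (φ u) = δ := by rw [dist_comm]; exact hdφu
      have hA' : dist u (φ m) ^ 2 ≥ 9/4 * δ^2 := by
        rw [e1, e3] at hA
        nlinarith [hA, hfm]
      have hB' : dist (φ (φ u)) u ^ 2 ≥ 4 * δ^2 := by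
        rw [e3, e4] at hB
        have hc : dist (φ m) u = dist u (φ m) := dist_comm _ _
        rw [hc] at hB
        nlinarith [hB, hA']
      have hsq : (2*δ)^2 ≤ dist u (φ (φ u))^2 := by
        have hc2 : dist (φ (φ u)) u = dist u (φ (φ u)) := dist_comm _ _
        rw [hc2] at hB'
        nlinarith [hB']
      exact le_of_sq_le hsq dist_nonneg
    exact le_antisymm hup hlo
  have hDn : ∀ n : ℕ, dist x (w n) = n * δ := by
    have key : ∀ n : ℕ, dist x (w n) = n * δ ∧ dist x (w (n+1)) = (n+1) * δ := by
      intro n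
      induction n with
      | zero =>
        constructor
        · rw [hw0]; simp
        · have h := hstep 0
          rw [hw0] at h
          rw [h]; push_cast; ring
      | succ n ih =>
        obtain ⟨ih1, ih2⟩ := ih
        refine ⟨by rw [ih2]; push_cast; ring, ?_⟩
        have e : w (n+2) = φ (φ (w n)) := by rw [hwsucc (n+1), hwsucc n]
        have h2δ : dist (w n) (w (n+2)) = 2 * δ := by
          rw [e]; exact hD2 (w n) (hwmem n)
        have hm1 : dist (w (n+1)) (w n) = dist (w n) (w (n+2)) / 2 := by
          rw [dist_comm, hstep n, h2δ]; ring
        have hm2 : dist (w (n+1)) (w (n+2)) = dist (w n) (w (n+2)) / 2 := by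
          rw [hstep (n+1), h2δ]; ring
        have hC := hcn x (w n) (w (n+2)) (w (n+1)) hm1 hm2
        have hup : dist x (w (n+2)) ≤ ((n:ℝ)+2) * δ := by
          calc dist x (w (n+2)) ≤ dist x (w (n+1)) + dist (w (n+1)) (w (n+2)) :=
                dist_triangle _ _ _
            _ = ((n:ℝ)+1) * δ + δ := by
                have hst := hstep (n+1)
                push_cast at ih2 ⊢
                linarith [ih2, hst]
            _ = ((n:ℝ)+2) * δ := by ring
        have hlo : ((n:ℝ)+2) * δ ≤ dist x (w (n+2)) := by
          have e1 : dist (w (n+1)) x = ((n:ℝ)+1) * δ := by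
            rw [dist_comm]
            push_cast at ih2 ⊢
            linarith [ih2]
          have e2 : dist (w n) x = (n:ℝ) * δ := by rw [dist_comm]; exact ih1
          have e3 : dist (w (n+2)) (w n) = 2 * δ := by rw [dist_comm]; exact h2δ
          rw [e1, e2, e3] at hC
          have hsq : (((n:ℝ)+2) * δ)^2 ≤ dist (w (n+2)) x ^2 := by nlinarith [hC]
          have hle := le_of_sq_le hsq dist_nonneg
          rwa [dist_comm (w (n+2)) x] at hle
        have : dist x (w (n+2)) = ((n:ℝ)+2) * δ := le_antisymm hup hlo
        rw [this]; push_cast; ring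
    exact fun n => (key n).1
  have hgoal : φ x = x := by
    have hδz : δ = 0 := by
      by_contra hδz
      have hδpos : 0 < δ := lt_of_le_of_ne hδ0 (Ne.symm hδz)
      have main : ∀ n : ℕ, (2*(n:ℝ)+1) * δ^2 ≤ dist (p₂ x) (p₃ (p₂ x)) ^2 := by
        intro n
        have hY0 : p₂ x ∈ C₂ := (hp₂ x).1
        have hYn : p₂ (w n) ∈ C₂ := (hp₂ _).1
        have hY : dist (p₂ x) (p₂ (w n)) = n * δ := by
          rw [iso12 x hx (w n) (hwmem n)]; exact hDn n
        have hZ : dist (p₃ (p₂ x)) (p₃ (p₂ (w n))) = n * δ := by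
          rw [iso23 _ hY0 _ hYn]; exact hY
        have hL0 : dist (p₂ (w n)) (p₃ (p₂ (w n))) = dist (p₂ x) (p₃ (p₂ x)) :=
          c23 _ hYn _ hY0
        have hPy := pythagoras hg hcn h₂cv hp₂ (p₃ (p₂ x)) (c := p₂ (w n)) hYn
        rw [id23 _ hY0] at hPy
        have hquad := quad_ineq hg hcn (p₂ x) (p₂ (w n)) (p₃ (p₂ (w n))) (p₃ (p₂ x))
        have hupper : dist (p₂ x) (p₃ (p₂ (w n))) ^2 ≤
            ((n:ℝ)*δ)^2 + dist (p₂ x) (p₃ (p₂ x)) ^2 := by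
          have e1 : dist (p₃ (p₂ (w n))) (p₃ (p₂ x)) = (n:ℝ) * δ := by
            rw [dist_comm]; exact hZ
          have e2 : dist (p₃ (p₂ x)) (p₂ x) = dist (p₂ x) (p₃ (p₂ x)) := dist_comm _ _
          have e3 : dist (p₂ (w n)) (p₃ (p₂ (w n))) = dist (p₂ x) (p₃ (p₂ x)) := hL0
          have e4 : dist (p₃ (p₂ x)) (p₂ (w n)) = dist (p₂ (w n)) (p₃ (p₂ x)) :=
            dist_comm _ _
          rw [e1, e2, e3, hY] at hquad
          rw [e2, e4, hY] at hPy
          linarith [hquad, hPy]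
        have hlower : ((n:ℝ)+1) * δ ≤ dist (p₂ x) (p₃ (p₂ (w n))) := by
          have hne := ne1 (p₂ x) (p₃ (p₂ (w n)))
          rw [id12 x hx] at hne
          have e : p₁ (p₃ (p₂ (w n))) = w (n+1) := by rw [hwsucc n, hφdef]
          rw [e] at hne
          calc ((n:ℝ)+1) * δ = dist x (w (n+1)) := by rw [hDn (n+1)]; push_cast; ring
            _ ≤ dist (p₂ x) (p₃ (p₂ (w n))) := hne
        have hsq : (((n:ℝ)+1) * δ)^2 ≤ dist (p₂ x) (p₃ (p₂ (w n))) ^2 := by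
          nlinarith [hlower, dist_nonneg (x := p₂ x) (y := p₃ (p₂ (w n))),
            mul_nonneg (by positivity : (0:ℝ) ≤ ((n:ℝ)+1)) hδ0]
        nlinarith [hsq, hupper]
      obtain ⟨n, hn⟩ := exists_nat_gt (dist (p₂ x) (p₃ (p₂ x)) ^2 / δ^2)
      have hδ2 : 0 < δ^2 := by positivity
      rw [div_lt_iff₀ hδ2] at hn
      have hmn := main n
      nlinarith [hmn, hn]
    have : dist x (φ x) = 0 := by rw [← hδdef]; exact hδz
    exact (eq_of_dist_eq_zero this).symm
  rw [← hφdef x]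
  exact hgoal
end

section
/- Let G be a locally compact second countable group equipped with a Haar measure, let X be a complete separable metric space, and let f : G → X be a measurable map. Assume that for every ε > 0 and every g ∈ G there is a neighbourhood U of g such that the essential supremum, over (h, h') ∈ U × U with respect to the product of the Haar measure with itself, of d(f(h), f(h')) is strictly less than ε. Then f agrees almost everywhere with a continuous function G → X. -/
/-!
Along the filter `𝓝 x ⊓ ae μ` the map `f` is Cauchy: a conull slice of the product estimate
puts `f` a.e. within `ε` of a single value near `x`. By completeness `f` has a limit `g x`
along this filter. Limits along `𝓝 x ⊓ L` vary continuously with `x` whenever these filters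
are nontrivial, which holds for an open-positive measure; and `dist (f z) (g z)` tends to `0`
along every `𝓝 x ⊓ ae μ`, which by second countability forces `f = g` almost everywhere.
-/

open MeasureTheory Filter Topology Metric

theorem continuous_of_forall_tendsto_nhds_inf {α X : Type*} [TopologicalSpace α]
    [TopologicalSpace X] [RegularSpace X] {L : Filter α} {f g : α → X}
    (hL : ∀ x, (𝓝 x ⊓ L).NeBot) (hfg : ∀ x, Tendsto f (𝓝 x ⊓ L) (𝓝 (g x))) :
    Continuous g := by
  refine continuous_iff_continuousAt.2 fun x => (closed_nhds_basis (g x)).tendsto_right_iff.2 ?_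
  rintro V ⟨hV, hV_closed⟩
  obtain ⟨U, hU, T, hT, hUT⟩ := mem_inf_iff_superset.1 (hfg x hV)
  filter_upwards [eventually_mem_nhds_iff.2 hU] with x' hx'
  have := hL x'
  exact hV_closed.mem_of_tendsto (hfg x') (mem_inf_of_inter hx' hT hUT)

theorem exists_ae_dist_le_of_ae_prod_dist_le {α X : Type*} [MeasurableSpace α]
    [PseudoMetricSpace X] {ν : Measure α} [SFinite ν] (hν : ν ≠ 0) {f : α → X} {c : ℝ}
    (h : ∀ᵐ p ∂ν.prod ν, dist (f p.1) (f p.2) ≤ c) : ∃ y, ∀ᵐ z ∂ν, dist (f z) y ≤ c := by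
  have := ae_neBot.2 hν
  obtain ⟨z₀, hz₀⟩ := (Measure.ae_ae_of_ae_prod h).exists
  exact ⟨f z₀, hz₀.mono fun z hz => (dist_comm (f z) (f z₀)).trans_le hz⟩

section OpenPosMeasure

variable {α : Type*} [TopologicalSpace α] [MeasurableSpace α] (μ : Measure α)

theorem neBot_nhds_inf_ae [μ.IsOpenPosMeasure] (x : α) : (𝓝 x ⊓ ae μ).NeBot := by
  refine inf_neBot_iff.2 fun s hs t ht => nonempty_of_measure_ne_zero (μ := μ) ?_
  rw [measure_inter_conull ht]
  exact (Measure.measure_pos_of_mem_nhds μ hs).ne'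

variable {μ}

theorem eventually_nhds_inf_ae_of_ae_restrict [OpensMeasurableSpace α] {p : α → Prop}
    {x : α} {U : Set α} (hU : U ∈ 𝓝 x) (h : ∀ᵐ z ∂μ.restrict U, p z) :
    ∀ᶠ z in 𝓝 x ⊓ ae μ, p z := by
  have h' : ∀ᵐ z ∂μ, z ∈ interior U → p z :=
    (ae_restrict_iff' isOpen_interior.measurableSet).1
      (ae_restrict_of_ae_restrict_of_subset interior_subset h)
  exact mem_inf_of_inter (interior_mem_nhds.2 hU) h' fun z hz => hz.2 hz.1

theorem ae_of_forall_eventually_nhds_inf_ae [SecondCountableTopology α] {p : α → Prop}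
    (h : ∀ x, ∀ᶠ z in 𝓝 x ⊓ ae μ, p z) : ∀ᵐ z ∂μ, p z := by
  refine measure_null_of_locally_null _ fun x _ => ?_
  obtain ⟨U, hU, T, hT, hUT⟩ := mem_inf_iff_superset.1 (h x)
  refine ⟨{z | ¬p z} ∩ U, inter_mem_nhdsWithin _ hU, measure_mono_null ?_ hT⟩
  exact fun z ⟨hz, hzU⟩ hzT => hz (hUT ⟨hzU, hzT⟩)

theorem ae_eq_of_forall_tendsto_nhds_inf_ae [SecondCountableTopology α] {X : Type*}
    [MetricSpace X] {f g : α → X} (hg : Continuous g)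
    (hfg : ∀ x, Tendsto f (𝓝 x ⊓ ae μ) (𝓝 (g x))) : f =ᵐ[μ] g := by
  have hsmall : ∀ ε > 0, ∀ᵐ z ∂μ, dist (f z) (g z) < ε := fun ε hε =>
    ae_of_forall_eventually_nhds_inf_ae fun x => by
      have hdist := (hfg x).dist ((hg.tendsto x).mono_left inf_le_left)
      rw [dist_self] at hdist
      exact hdist.eventually (gt_mem_nhds hε)
  filter_upwards [ae_all_iff.2 fun n : ℕ => hsmall (1 / (n + 1)) Nat.one_div_pos_of_nat]
    with z hz
  refine eq_of_forall_dist_le fun ε hε => ?_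
  obtain ⟨n, hn⟩ := exists_nat_one_div_lt hε
  exact ((hz n).trans hn).le

theorem exists_continuous_ae_eq_of_cauchy_map_nhds_inf_ae [μ.IsOpenPosMeasure]
    [SecondCountableTopology α] {X : Type*} [MetricSpace X] [CompleteSpace X] {f : α → X}
    (hf : ∀ x, Cauchy (map f (𝓝 x ⊓ ae μ))) : ∃ g : α → X, Continuous g ∧ f =ᵐ[μ] g := by
  choose g hg using fun x => CompleteSpace.complete (hf x)
  have hg_cont : Continuous g := continuous_of_forall_tendsto_nhds_inf (neBot_nhds_inf_ae μ) hg
  exact ⟨g, hg_cont, ae_eq_of_forall_tendsto_nhds_inf_ae hg_cont hg⟩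

theorem cauchy_map_nhds_inf_ae_of_ae_prod_dist_lt [OpensMeasurableSpace α]
    [μ.IsOpenPosMeasure] [SFinite μ] {X : Type*} [PseudoMetricSpace X] {f : α → X} {x : α}
    (hosc : ∀ ε : ℝ, 0 < ε → ∃ U ∈ 𝓝 x, ∃ c : ℝ, c < ε ∧
      ∀ᵐ p ∂((μ.restrict U).prod (μ.restrict U)), dist (f p.1) (f p.2) ≤ c) :
    Cauchy (map f (𝓝 x ⊓ ae μ)) := by
  refine Metric.cauchy_iff.2 ⟨(neBot_nhds_inf_ae μ x).map f, fun ε hε => ?_⟩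
  obtain ⟨U, hU, c, hcε, hc⟩ := hosc (ε / 2) (half_pos hε)
  have hU_pos : μ.restrict U ≠ 0 :=
    Measure.restrict_eq_zero.not.2 (Measure.measure_pos_of_mem_nhds μ hU).ne'
  obtain ⟨y, hy⟩ := exists_ae_dist_le_of_ae_prod_dist_le hU_pos hc
  refine ⟨closedBall y c, eventually_nhds_inf_ae_of_ae_restrict hU hy, fun a ha b hb => ?_⟩
  calc dist a b ≤ dist a y + dist b y := dist_triangle_right a b y
    _ ≤ c + c := add_le_add ha hb
    _ < ε := by linarith

end OpenPosMeasure

theorem ae_eq_continuous_of_small_essential_oscillation_general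
    {G : Type*} [Group G] [TopologicalSpace G]
    [LocallyCompactSpace G] [SecondCountableTopology G]
    [MeasurableSpace G] [BorelSpace G]
    (μ : Measure G) [μ.IsHaarMeasure]
    {X : Type*} [MetricSpace X] [CompleteSpace X]
    (f : G → X)
    (hosc : ∀ ε : ℝ, 0 < ε → ∀ g : G, ∃ U ∈ nhds g, ∃ c : ℝ, c < ε ∧
      ∀ᵐ p ∂((μ.restrict U).prod (μ.restrict U)), dist (f p.1) (f p.2) ≤ c) :
    ∃ g : G → X, Continuous g ∧ f =ᵐ[μ] g :=
  exists_continuous_ae_eq_of_cauchy_map_nhds_inf_ae fun x =>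
    cauchy_map_nhds_inf_ae_of_ae_prod_dist_lt fun ε hε => hosc ε hε x

/-- Monod, Lemma: a measurable map from a locally compact second countable group (with Haar
measure) to a complete separable metric space which is locally essentially almost constant up
to `ε` (its essential oscillation on some neighbourhood of each point is `< ε`, for the
product of the Haar measure with itself) agrees almost everywhere with a continuous map. -/
theorem ae_eq_continuous_of_small_essential_oscillation
    {G : Type*} [Group G] [TopologicalSpace G] [IsTopologicalGroup G]
    [LocallyCompactSpace G] [SecondCountableTopology G]
    [MeasurableSpace G] [BorelSpace G]
    (μ : Measure G) [μ.IsHaarMeasure]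
    {X : Type*} [MetricSpace X] [CompleteSpace X] [TopologicalSpace.SeparableSpace X]
    [MeasurableSpace X] [BorelSpace X]
    (f : G → X) (hf : Measurable f)
    (hosc : ∀ ε : ℝ, 0 < ε → ∀ g : G, ∃ U ∈ nhds g, ∃ c : ℝ, c < ε ∧
      ∀ᵐ p ∂((μ.restrict U).prod (μ.restrict U)), dist (f p.1) (f p.2) ≤ c) :
    ∃ g : G → X, Continuous g ∧ f =ᵐ[μ] g :=
  ae_eq_continuous_of_small_essential_oscillation_general μ f hosc
end

section
/- Let J be a locally compact σ-compact Hausdorff topological group and let V ⊆ J be a neighbourhood of the identity element. Then there exists a compact normal subgroup K of J contained in V such that the quotient group J/K is second countable. -/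
/-!
Pick compact symmetric neighbourhoods `W₀ ⊇ W₁ ⊇ ⋯` of `1` with `W₀ ⊆ V`, `W_{n+1}² ⊆ W_n`,
and `x W_{n+1} x⁻¹ ⊆ W_n` for all `x` in the `n`-th set of a compact exhaustion of `J`. Then
`K = ⋂ W_n` is a compact subgroup, normal because every element of `J` eventually lies in the
exhaustion. By compactness every neighbourhood of `K` contains some `W_n`, so the images of the
`W_n` form a countable neighbourhood basis of `1` in `J/K`; a first countable group is
pseudometrizable (Birkhoff–Kakutani), and a σ-compact pseudometrizable space is second countable.
-/

open Set Filter Topology Pointwise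

theorem Continuous.sigmaCompactSpace_of_surjective {X Y : Type*} [TopologicalSpace X]
    [TopologicalSpace Y] [SigmaCompactSpace X] {f : X → Y} (hf : Continuous f)
    (hsurj : Function.Surjective f) : SigmaCompactSpace Y := by
  rw [← isSigmaCompact_univ_iff, ← hsurj.range_eq]
  exact isSigmaCompact_range hf

theorem IsTopologicalGroup.secondCountableTopology_of_isCountablyGenerated_nhds_one
    {G : Type*} [Group G] [TopologicalSpace G] [IsTopologicalGroup G] [SigmaCompactSpace G]
    (h : (𝓝 (1 : G)).IsCountablyGenerated) : SecondCountableTopology G := by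
  let _ := IsTopologicalGroup.rightUniformSpace G
  have : (uniformity G).IsCountablyGenerated := Filter.comap.isCountablyGenerated _ _
  let _ := TopologicalSpace.pseudoMetrizableSpacePseudoMetric G
  exact EMetric.secondCountable_of_sigmaCompact G

theorem QuotientGroup.preimage_mem_nhds_of_mem_nhds_one {G : Type*} [Group G]
    [TopologicalSpace G] {N : Subgroup G} {T : Set (G ⧸ N)} (hT : T ∈ 𝓝 ((1 : G) : G ⧸ N))
    {k : G} (hk : k ∈ N) : (↑) ⁻¹' T ∈ 𝓝 k := by
  have hk1 : (k : G ⧸ N) = ((1 : G) : G ⧸ N) := QuotientGroup.eq.2 (by simpa using hk)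
  exact continuous_mk.continuousAt.preimage_mem_nhds (hk1 ▸ hT)

section

variable {J : Type*} [Group J] [TopologicalSpace J]

theorem IsCompact.eventually_forall_conj_mem [IsTopologicalGroup J] {F U : Set J}
    (hF : IsCompact F) (hU : U ∈ 𝓝 (1 : J)) :
    ∀ᶠ y in 𝓝 (1 : J), ∀ x ∈ F, x * y * x⁻¹ ∈ U := by
  refine hF.eventually_forall_of_forall_eventually fun x _ => ?_
  have hconj : Continuous fun z : J × J => z.2 * z.1 * z.2⁻¹ := by fun_prop
  exact hconj.continuousAt.preimage_mem_nhds (by simpa using hU)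

theorem IsCompact.exists_compact_closed_nhds_one_inv_eq_mul_subset_conj
    [IsTopologicalGroup J] [WeaklyLocallyCompactSpace J] {F U : Set J} (hF : IsCompact F)
    (hU : U ∈ 𝓝 (1 : J)) :
    ∃ W ∈ 𝓝 (1 : J), IsCompact W ∧ IsClosed W ∧ W⁻¹ = W ∧ W * W ⊆ U ∧
      ∀ x ∈ F, ∀ y ∈ W, x * y * x⁻¹ ∈ U := by
  obtain ⟨L, hLc, hL⟩ := exists_compact_mem_nhds (1 : J)
  have hU' : U ∩ L ∩ {y | ∀ x ∈ F, x * y * x⁻¹ ∈ U} ∈ 𝓝 (1 : J) :=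
    inter_mem (inter_mem hU hL) (hF.eventually_forall_conj_mem hU)
  obtain ⟨W, hW, hWc, hWinv, hWmul⟩ := exists_closed_nhds_one_inv_eq_mul_subset hU'
  have hWsub : W ⊆ U ∩ L ∩ {y | ∀ x ∈ F, x * y * x⁻¹ ∈ U} := fun y hy =>
    hWmul ⟨y, hy, 1, mem_of_mem_nhds hW, mul_one y⟩
  exact ⟨W, hW, hLc.of_isClosed_subset hWc fun y hy => (hWsub hy).1.2, hWc, hWinv,
    fun y hy => (hWmul hy).1.1, fun x hx y hy => (hWsub hy).2 x hx⟩

structure IsKakutaniKodairaSeq (F W : ℕ → Set J) : Prop where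
  mem_nhds : ∀ n, W n ∈ 𝓝 (1 : J)
  isCompact : ∀ n, IsCompact (W n)
  isClosed : ∀ n, IsClosed (W n)
  inv_eq : ∀ n, (W n)⁻¹ = W n
  mul_subset : ∀ n, W (n + 1) * W (n + 1) ⊆ W n
  conj_mem : ∀ n, ∀ x ∈ F n, ∀ y ∈ W (n + 1), x * y * x⁻¹ ∈ W n

theorem exists_isKakutaniKodairaSeq [IsTopologicalGroup J] [WeaklyLocallyCompactSpace J]
    {F : ℕ → Set J} (hF : ∀ n, IsCompact (F n)) {V : Set J} (hV : V ∈ 𝓝 (1 : J)) :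
    ∃ W, IsKakutaniKodairaSeq F W ∧ W 0 ⊆ V := by
  choose S hS_nhds hS_compact hS_closed hS_inv hS_mul hS_conj using
    fun n (U : {U : Set J // U ∈ 𝓝 (1 : J)}) =>
      (hF n).exists_compact_closed_nhds_one_inv_eq_mul_subset_conj U.2
  let W : ℕ → {U : Set J // U ∈ 𝓝 (1 : J)} := fun n =>
    Nat.rec ⟨S 0 ⟨V, hV⟩, hS_nhds 0 _⟩ (fun n U => ⟨S n U, hS_nhds n U⟩) n
  have hW : ∀ n, ∃ m U, (W n).1 = S m U := by
    rintro (_ | n) <;> exact ⟨_, _, rfl⟩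
  refine ⟨fun n => (W n).1, ⟨fun n => (W n).2, fun n => ?_, fun n => ?_, fun n => ?_,
    fun n => hS_mul n (W n), fun n => hS_conj n (W n)⟩, ?_⟩
  · obtain ⟨m, U, h⟩ := hW n; exact h ▸ hS_compact m U
  · obtain ⟨m, U, h⟩ := hW n; exact h ▸ hS_closed m U
  · obtain ⟨m, U, h⟩ := hW n; exact h ▸ hS_inv m U
  · exact fun y hy => hS_mul 0 ⟨V, hV⟩ ⟨y, hy, 1, mem_of_mem_nhds (W 0).2, mul_one y⟩

namespace IsKakutaniKodairaSeq

variable {F W : ℕ → Set J} (hW : IsKakutaniKodairaSeq F W)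
include hW

theorem antitone : Antitone W :=
  antitone_nat_of_succ_le fun n y hy =>
    hW.mul_subset n ⟨y, hy, 1, mem_of_mem_nhds (hW.mem_nhds (n + 1)), mul_one y⟩

def subgroup : Subgroup J where
  carrier := ⋂ n, W n
  one_mem' := mem_iInter.2 fun n => mem_of_mem_nhds (hW.mem_nhds n)
  mul_mem' ha hb := mem_iInter.2 fun n =>
    hW.mul_subset n (mul_mem_mul (mem_iInter.1 ha (n + 1)) (mem_iInter.1 hb (n + 1)))
  inv_mem' ha := mem_iInter.2 fun n => hW.inv_eq n ▸ inv_mem_inv.2 (mem_iInter.1 ha n)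

theorem subgroup_subset (n : ℕ) : (hW.subgroup : Set J) ⊆ W n := iInter_subset _ n

theorem isCompact_subgroup : IsCompact (hW.subgroup : Set J) :=
  (hW.isCompact 0).of_isClosed_subset (isClosed_iInter hW.isClosed) (hW.subgroup_subset 0)

theorem normal_subgroup (hFm : Monotone F) (hFcov : ⋃ n, F n = univ) : hW.subgroup.Normal := by
  refine ⟨fun k hk g => mem_iInter.2 fun n => ?_⟩
  obtain ⟨N, hgN⟩ := mem_iUnion.1 (hFcov.symm ▸ mem_univ g : g ∈ ⋃ n, F n)
  exact hW.antitone (le_max_left n N) <| hW.conj_mem (max n N) g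
    (hFm (le_max_right n N) hgN) k (mem_iInter.1 hk _)

theorem exists_subset_of_forall_mem_nhds {U : Set J}
    (hU : ∀ x ∈ (hW.subgroup : Set J), U ∈ 𝓝 x) : ∃ n, W n ⊆ U :=
  exists_subset_nhds_of_isCompact' hW.antitone.directed_ge hW.isCompact hW.isClosed hU

theorem hasBasis_nhds_quotient [IsTopologicalGroup J] :
    (𝓝 ((1 : J) : J ⧸ hW.subgroup)).HasBasis (fun _ => True) fun n => (↑) '' W n := by
  refine ⟨fun T => ⟨fun hT => ?_, fun ⟨n, _, hn⟩ => ?_⟩⟩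
  · obtain ⟨n, hn⟩ := hW.exists_subset_of_forall_mem_nhds fun k hk =>
      QuotientGroup.preimage_mem_nhds_of_mem_nhds_one hT hk
    exact ⟨n, trivial, image_subset_iff.2 hn⟩
  · exact mem_of_superset (QuotientGroup.isOpenMap_coe.image_mem_nhds (hW.mem_nhds n)) hn

end IsKakutaniKodairaSeq

end

theorem exists_compact_normal_subgroup_secondCountable_quotient_general
    {J : Type*} [Group J] [TopologicalSpace J] [IsTopologicalGroup J]
    [LocallyCompactSpace J] [SigmaCompactSpace J]
    (V : Set J) (hV : V ∈ nhds (1 : J)) :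
    ∃ K : Subgroup J, K.Normal ∧ IsCompact (K : Set J) ∧ (K : Set J) ⊆ V ∧
      SecondCountableTopology (J ⧸ K) := by
  obtain ⟨W, hW, hWV⟩ := exists_isKakutaniKodairaSeq (isCompact_compactCovering J) hV
  have : SigmaCompactSpace (J ⧸ hW.subgroup) :=
    QuotientGroup.continuous_mk.sigmaCompactSpace_of_surjective QuotientGroup.mk_surjective
  have hK := hW.normal_subgroup (compactCovering_subset J) (iUnion_compactCovering J)
  exact ⟨hW.subgroup, hK, hW.isCompact_subgroup, (hW.subgroup_subset 0).trans hWV,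
    IsTopologicalGroup.secondCountableTopology_of_isCountablyGenerated_nhds_one
      hW.hasBasis_nhds_quotient.isCountablyGenerated⟩

/-- Kakutani–Kodaira: in a locally compact σ-compact Hausdorff group `J`, every neighbourhood
`V` of the identity contains a compact normal subgroup `K` such that `J/K` is second
countable. -/
theorem exists_compact_normal_subgroup_secondCountable_quotient
    {J : Type*} [Group J] [TopologicalSpace J] [IsTopologicalGroup J]
    [LocallyCompactSpace J] [SigmaCompactSpace J] [T2Space J]
    (V : Set J) (hV : V ∈ nhds (1 : J)) :
    ∃ K : Subgroup J, K.Normal ∧ IsCompact (K : Set J) ∧ (K : Set J) ⊆ V ∧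
      SecondCountableTopology (J ⧸ K) :=
  exists_compact_normal_subgroup_secondCountable_quotient_general V hV
end
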